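/- arXiv:2402.14799 — 10 statements merged into one kernel-verified Lean document; each statement's English description precedes it below -/
import Mathlib

section
/- The polynomial T₄(x₁,x₂,x₃,x₄) = [x₁,x₂][x₃,x₄] - [x₁,x₃][x₂,x₄] + [x₂,x₃][x₁,x₄] is a weak polynomial identity for the pair (A₁, V): for all u₁, u₂, u₃, u₄ ∈ V, [u₁,u₂][u₃,u₄] - [u₁,u₃][u₂,u₄] + [u₂,u₃][u₁,u₄] = 0 in A₁. -/
/-- The defining relation of the Weyl algebra: `y * x = x * y + 1`. -/
inductive WeylRel (F : Type) [Field F] :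
    FreeAlgebra F (Fin 2) → FreeAlgebra F (Fin 2) → Prop
  | rel : WeylRel F (FreeAlgebra.ι F 1 * FreeAlgebra.ι F 0)
      (FreeAlgebra.ι F 0 * FreeAlgebra.ι F 1 + 1)

/-- The Weyl algebra A₁ over `F`. -/
abbrev Weyl (F : Type) [Field F] := RingQuot (WeylRel F)

/-- The generator `x` of the Weyl algebra. -/
noncomputable def Wx (F : Type) [Field F] : Weyl F :=
  RingQuot.mkAlgHom F (WeylRel F) (FreeAlgebra.ι F 0)

/-- The generator `y` of the Weyl algebra. -/
noncomputable def Wy (F : Type) [Field F] : Weyl F :=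
  RingQuot.mkAlgHom F (WeylRel F) (FreeAlgebra.ι F 1)

/-- `V = F`-span of `{x, y}` inside the Weyl algebra. -/
noncomputable def WV (F : Type) [Field F] : Submodule F (Weyl F) :=
  Submodule.span F {Wx F, Wy F}

lemma weyl_rel (F : Type) [Field F] : Wy F * Wx F = Wx F * Wy F + 1 := by
  have h := RingQuot.mkAlgHom_rel F (WeylRel.rel (F := F))
  simpa [Wx, Wy, map_mul, map_add, map_one] using h

lemma weyl_comm (F : Type) [Field F] (a b c d : F) :
    (a • Wx F + b • Wy F) * (c • Wx F + d • Wy F) -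
      (c • Wx F + d • Wy F) * (a • Wx F + b • Wy F) = (b * c - a * d) • (1 : Weyl F) := by
  have h : Wy F * Wx F = Wx F * Wy F + 1 := weyl_rel F
  simp only [add_mul, mul_add, smul_mul_smul_comm, h]
  module

/-- T₄ is a weak polynomial identity for the pair (A₁, V). -/
theorem weyl_T4_weak_identity (F : Type) [Field F]
    (u₁ u₂ u₃ u₄ : Weyl F) (h₁ : u₁ ∈ WV F) (h₂ : u₂ ∈ WV F)
    (h₃ : u₃ ∈ WV F) (h₄ : u₄ ∈ WV F) :
    (u₁ * u₂ - u₂ * u₁) * (u₃ * u₄ - u₄ * u₃) -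
      (u₁ * u₃ - u₃ * u₁) * (u₂ * u₄ - u₄ * u₂) +
      (u₂ * u₃ - u₃ * u₂) * (u₁ * u₄ - u₄ * u₁) = 0 := by
  rw [WV, Submodule.mem_span_pair] at h₁ h₂ h₃ h₄
  obtain ⟨a₁, b₁, rfl⟩ := h₁
  obtain ⟨a₂, b₂, rfl⟩ := h₂
  obtain ⟨a₃, b₃, rfl⟩ := h₃
  obtain ⟨a₄, b₄, rfl⟩ := h₄
  rw [weyl_comm, weyl_comm, weyl_comm, weyl_comm, weyl_comm, weyl_comm,
    smul_mul_smul_comm, smul_mul_smul_comm, smul_mul_smul_comm, mul_one]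
  match_scalars
  ring
end

section
/- Any weak polynomial identity for the pair (A₁, V) of degree at most 2 is zero; that is, if f ∈ F⟨X⟩ has degree ≤ 2 and f(u₁,…,u_m) = 0 in A₁ for all u₁,…,u_m ∈ V, then f = 0 in F⟨X⟩. -/
/-!
The Weyl algebra acts on `F[X]` by `x ↦ X ·` and `y ↦ d/dX`, and applying an element to `1`
turns a weak identity `f` into linear relations between its coefficients in the basis of words.
Substituting `x` for the variable `i` and `0` for all others sends a word to `X ^ n` exactly when
it is the `n`-th power of `i`, so the coefficients of all such words vanish. By the degree bound,
what remains of `f` is a combination of words `xᵢ xⱼ` with `i ≠ j`. Substituting `y` for `xᵢ` and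
`x` for `xⱼ` and `0` for all others, the constant term of `z • 1` vanishes for `z = z' y` but is
`1` for `z = y x`, which isolates the coefficient of `xᵢ xⱼ`.
-/

open Polynomial

namespace FreeAlgebra

variable {R X : Type*} [CommSemiring R]

theorem basisFreeMonoid_apply (w : FreeMonoid X) :
    basisFreeMonoid R X w = FreeMonoid.lift (ι R) w := by
  change equivMonoidAlgebraFreeMonoid.symm (MonoidAlgebra.of R (FreeMonoid X) w) = _
  simp [equivMonoidAlgebraFreeMonoid, AlgEquiv.ofAlgHom]

theorem lift_basisFreeMonoid {A : Type*} [Semiring A] [Algebra R A] (u : X → A)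
    (w : FreeMonoid X) : lift R u (basisFreeMonoid R X w) = FreeMonoid.lift u w := by
  rw [basisFreeMonoid_apply, ← MonoidHom.coe_coe, ← MonoidHom.comp_apply]
  congr 1
  ext; simp

end FreeAlgebra

theorem Module.Basis.repr_eq_zero_of_dual {ι R M : Type*} [CommSemiring R] [AddCommMonoid M]
    [Module R M] (b : Module.Basis ι R M) (φ : M →ₗ[R] R) {f : M} (hf : φ f = 0) {i : ι}
    (hi : φ (b i) = 1) (hother : ∀ j ≠ i, b.repr f j ≠ 0 → φ (b j) = 0) :
    b.repr f i = 0 := by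
  classical
  calc b.repr f i = (b.repr f).sum (fun j c => c * φ (b j)) := by
        rw [Finsupp.sum_eq_single i (fun j hj hji => by rw [hother j hji hj, mul_zero])
          (by simp), hi, mul_one]
    _ = φ f := by
        conv_rhs => rw [← b.linearCombination_repr f]
        simp [Finsupp.linearCombination_apply, map_finsuppSum]
    _ = 0 := hf

section WeylRep

variable (F : Type) [Field F]

noncomputable def weylRep : Weyl F →ₐ[F] Module.End F F[X] :=
  RingQuot.liftAlgHom F ⟨FreeAlgebra.lift F ![LinearMap.mulLeft F X, derivative], by
    rintro _ _ ⟨⟩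
    refine LinearMap.ext fun p => ?_
    simp [derivative_mul, add_comm]⟩

@[simp]
theorem weylRep_Wx (p : F[X]) : weylRep F (Wx F) p = X * p := by
  simp [weylRep, Wx, RingQuot.liftAlgHom_mkAlgHom_apply]

@[simp]
theorem weylRep_Wy (p : F[X]) : weylRep F (Wy F) p = derivative p := by
  simp [weylRep, Wy, RingQuot.liftAlgHom_mkAlgHom_apply]

theorem weylRep_Wx_pow_one (n : ℕ) : weylRep F (Wx F ^ n) 1 = X ^ n := by
  induction n with
  | zero => simp
  | succ n ih => rw [pow_succ', map_mul, Module.End.mul_apply, ih, weylRep_Wx, pow_succ']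

theorem weylRep_mul_Wy_one (z : Weyl F) : weylRep F (z * Wy F) 1 = 0 := by
  simp

theorem weylRep_Wy_mul_Wx_one : weylRep F (Wy F * Wx F) 1 = 1 := by
  simp

end WeylRep

theorem List.prod_map_piSingle {α M : Type*} [DecidableEq α] [MonoidWithZero M] (i : α) (a : M)
    (l : List α) : (l.map (Pi.single i a)).prod = if ∀ k ∈ l, k = i then a ^ l.length else 0 := by
  induction l with
  | nil => simp
  | cons k l ih =>
    by_cases hk : k = i
    · subst hk; simp [ih, pow_succ']
    · simp [hk]

theorem FreeMonoid.eq_replicate_or_eq_pair_of_length_le_two {α : Type*} [Nonempty α]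
    {w : FreeMonoid α} (hw : w.length ≤ 2) :
    (∃ n i, w = ofList (List.replicate n i)) ∨ ∃ i j, i ≠ j ∧ w = ofList [i, j] := by
  obtain _ | ⟨i, _ | ⟨j, _ | ⟨k, l⟩⟩⟩ := w
  · exact .inl ⟨0, Classical.arbitrary _, rfl⟩
  · exact .inl ⟨1, i, rfl⟩
  · obtain rfl | hij := eq_or_ne i j
    · exact .inl ⟨2, i, rfl⟩
    · exact .inr ⟨i, j, hij, rfl⟩
  · change (i :: j :: k :: l).length ≤ 2 at hw
    simp at hw

theorem Submodule.piSingle_mem {R M ι : Type*} [Semiring R] [AddCommMonoid M] [Module R M]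
    [DecidableEq ι] {p : Submodule R M} {a : M} (ha : a ∈ p) (i k : ι) :
    (Pi.single i a : ι → M) k ∈ p := by
  by_cases hk : k = i
  · subst hk; simpa using ha
  · simp [hk, p.zero_mem]

theorem FreeAlgebra.length_le_of_repr_ne_zero {R X : Type*} [CommSemiring R] {n : ℕ}
    {f : FreeAlgebra R X}
    (hf : f ∈ Submodule.span R {w | ∃ l : List X, l.length ≤ n ∧ w = (l.map (ι R)).prod})
    {w : FreeMonoid X} (hw : (basisFreeMonoid R X).repr f w ≠ 0) : w.length ≤ n := by
  have hspan : f ∈ Submodule.span R (basisFreeMonoid R X '' {w | w.length ≤ n}) := by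
    refine Submodule.span_mono ?_ hf
    rintro _ ⟨l, hl, rfl⟩
    exact ⟨FreeMonoid.ofList l, hl, by rw [basisFreeMonoid_apply, FreeMonoid.lift_ofList]⟩
  exact (basisFreeMonoid R X).mem_span_image.1 hspan (Finsupp.mem_support_iff.2 hw)

section WeakIdentity

variable {F : Type} [Field F]

def IsWeylWeakIdentity (f : FreeAlgebra F ℕ) : Prop :=
  ∀ u : ℕ → Weyl F, (∀ i, u i ∈ WV F) → FreeAlgebra.lift F u f = 0

theorem Wx_mem_WV : Wx F ∈ WV F := Submodule.subset_span (.inl rfl)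

theorem Wy_mem_WV : Wy F ∈ WV F := Submodule.subset_span (.inr rfl)

namespace IsWeylWeakIdentity

variable {f : FreeAlgebra F ℕ}

theorem repr_replicate (hf : IsWeylWeakIdentity f) (n i : ℕ) :
    (FreeAlgebra.basisFreeMonoid F ℕ).repr f (.ofList (List.replicate n i)) = 0 := by
  classical
  let u : ℕ → Weyl F := Pi.single i (Wx F)
  let φ := (lcoeff F n).comp ((LinearMap.applyₗ 1).comp
    ((weylRep F).comp (FreeAlgebra.lift F u)).toLinearMap)
  have hφ (w : FreeMonoid ℕ) : φ (FreeAlgebra.basisFreeMonoid F ℕ w) =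
      if w = .ofList (List.replicate n i) then 1 else 0 := by
    simp only [φ, u, LinearMap.comp_apply, AlgHom.toLinearMap_apply, AlgHom.comp_apply,
      FreeAlgebra.lift_basisFreeMonoid, FreeMonoid.lift_apply, List.prod_map_piSingle,
      LinearMap.applyₗ_apply_apply, lcoeff_apply]
    have hw : w = .ofList (List.replicate n i) ↔ (∀ k ∈ w.toList, k = i) ∧ n = w.length :=
      List.eq_replicate_iff.trans (and_comm.trans (and_congr_right' eq_comm))
    by_cases hall : ∀ k ∈ w.toList, k = i
    · rw [if_pos hall, weylRep_Wx_pow_one, coeff_X_pow]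
      exact if_congr (by rw [hw, and_iff_right hall]; rfl) rfl rfl
    · rw [if_neg hall, map_zero, LinearMap.zero_apply, coeff_zero,
        if_neg fun h => hall (hw.1 h).1]
  refine (FreeAlgebra.basisFreeMonoid F ℕ).repr_eq_zero_of_dual φ ?_ (by simp [hφ])
    (fun w hw _ => by simp [hφ, hw])
  simp [φ, hf u (Submodule.piSingle_mem Wx_mem_WV i)]

theorem repr_pair (hf : IsWeylWeakIdentity f)
    (hsupp : ∀ w, (FreeAlgebra.basisFreeMonoid F ℕ).repr f w ≠ 0 →
      ∃ k k', k ≠ k' ∧ w = .ofList [k, k'])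
    {i j : ℕ} (hij : i ≠ j) : (FreeAlgebra.basisFreeMonoid F ℕ).repr f (.ofList [i, j]) = 0 := by
  let u : ℕ → Weyl F := Pi.single i (Wy F) + Pi.single j (Wx F)
  let φ := (lcoeff F 0).comp ((LinearMap.applyₗ 1).comp
    ((weylRep F).comp (FreeAlgebra.lift F u)).toLinearMap)
  have hφ (k k' : ℕ) : φ (FreeAlgebra.basisFreeMonoid F ℕ (.ofList [k, k'])) =
      (weylRep F (u k * u k') 1).coeff 0 := by
    simp [φ, FreeAlgebra.lift_basisFreeMonoid]
  have hu_i : u i = Wy F := by simp [u, hij]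
  have hu_j : u j = Wx F := by simp [u, hij.symm]
  have hu (k : ℕ) (hki : k ≠ i) (hkj : k ≠ j) : u k = 0 := by simp [u, hki, hkj]
  have hpair (k k' : ℕ) (hkk' : k ≠ k') (hne : (k, k') ≠ (i, j)) :
      φ (FreeAlgebra.basisFreeMonoid F ℕ (.ofList [k, k'])) = 0 := by
    rw [hφ]
    rcases eq_or_ne k' j with rfl | hk'j
    · rw [hu k (by rintro rfl; exact hne rfl) hkk', zero_mul]; simp
    · rcases eq_or_ne k' i with rfl | hk'i
      · rw [hu_i, weylRep_mul_Wy_one, coeff_zero]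
      · rw [hu k' hk'i hk'j, mul_zero]; simp
  refine (FreeAlgebra.basisFreeMonoid F ℕ).repr_eq_zero_of_dual φ ?_ ?_ ?_
  · have hu_mem (k : ℕ) : u k ∈ WV F :=
      add_mem (Submodule.piSingle_mem Wy_mem_WV i k) (Submodule.piSingle_mem Wx_mem_WV j k)
    simp [φ, hf u hu_mem]
  · rw [hφ, hu_i, hu_j, weylRep_Wy_mul_Wx_one, coeff_one_zero]
  · intro w hw hw0
    obtain ⟨k, k', hkk', rfl⟩ := hsupp w hw0
    exact hpair k k' hkk' (by rintro ⟨⟩; exact hw rfl)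

end IsWeylWeakIdentity

end WeakIdentity

theorem weyl_no_weak_identity_deg_le_two_general (F : Type) [Field F]
    (f : FreeAlgebra F ℕ)
    (hdeg : f ∈ Submodule.span F
      {w : FreeAlgebra F ℕ | ∃ l : List ℕ, l.length ≤ 2 ∧ w = (l.map (FreeAlgebra.ι F)).prod})
    (hid : ∀ u : ℕ → Weyl F, (∀ i, u i ∈ WV F) → FreeAlgebra.lift F u f = 0) :
    f = 0 := by
  have hf : IsWeylWeakIdentity f := hid
  set b := FreeAlgebra.basisFreeMonoid F ℕ
  have hsupp (w : FreeMonoid ℕ) (hw : b.repr f w ≠ 0) : ∃ i j, i ≠ j ∧ w = .ofList [i, j] := by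
    obtain ⟨n, i, rfl⟩ | hpair := FreeMonoid.eq_replicate_or_eq_pair_of_length_le_two
      (FreeAlgebra.length_le_of_repr_ne_zero hdeg hw)
    · exact absurd (hf.repr_replicate n i) hw
    · exact hpair
  suffices b.repr f = 0 from b.repr.map_eq_zero_iff.1 this
  ext w
  by_contra hw
  obtain ⟨i, j, hij, rfl⟩ := hsupp w hw
  exact hw (hf.repr_pair hsupp hij)

/-- Any weak polynomial identity for (A₁, V) of degree at most 2 is zero. Here
"degree ≤ 2" means lying in the span of words of length ≤ 2 in the free algebra. -/
theorem weyl_no_weak_identity_deg_le_two (F : Type) [Field F] [Infinite F]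
    (f : FreeAlgebra F ℕ)
    (hdeg : f ∈ Submodule.span F
      {w : FreeAlgebra F ℕ | ∃ l : List ℕ, l.length ≤ 2 ∧ w = (l.map (FreeAlgebra.ι F)).prod})
    (hid : ∀ u : ℕ → Weyl F, (∀ i, u i ∈ WV F) → FreeAlgebra.lift F u f = 0) :
    f = 0 :=
  weyl_no_weak_identity_deg_le_two_general F f hdeg hid
end

section
/- If two bracket-monomials are equal in the free algebra F⟨X⟩, then they coincide: if x_{t₁}⋯x_{t_l}[x_{r₁},x_{s₁}]⋯[x_{r_k},x_{s_k}] = x_{t'₁}⋯x_{t'_{l'}}[x_{r'₁},x_{s'₁}]⋯[x_{r'_{k'}},x_{s'_{k'}}] in F⟨X⟩, where all r_i < s_i and r'_j < s'_j with k, k' > 0, then l = l', k = k', and the index sequences t, r, s coincide with t', r', s' respectively. -/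
/-!
Read off coefficients of words, the free algebra being the monoid algebra of the free monoid.
As `rᵢ ≠ sᵢ`, expanding `∏ᵢ [x_{rᵢ}, x_{sᵢ}]` involves no cancellation, so the words occurring
in `x_t ∏ᵢ [x_{rᵢ}, x_{sᵢ}]` are exactly the words `t w` in which the `i`-th two-letter block
of `w` is `rᵢsᵢ` or `sᵢrᵢ`. Both orders of the first block occur, so no common prefix of these
words is longer than `t`, which pins down `t`; and as `rᵢ < sᵢ`, a single such `w` already
determines the pairs.
-/

/-- The bracket-monomial `x_{t₁}⋯x_{t_l} [x_{r₁},x_{s₁}]⋯[x_{r_k},x_{s_k}]`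
in the free algebra, encoded by the list `t` and the list `rs` of pairs. -/
noncomputable def bracketMonomial (F : Type) [Field F] (t : List ℕ) (rs : List (ℕ × ℕ)) :
    FreeAlgebra F ℕ :=
  (t.map (FreeAlgebra.ι F)).prod *
    (rs.map fun p => FreeAlgebra.ι F p.1 * FreeAlgebra.ι F p.2 -
      FreeAlgebra.ι F p.2 * FreeAlgebra.ι F p.1).prod

open FreeAlgebra FreeMonoid

section WordCoeff

variable {R α : Type*} [CommRing R]

noncomputable def wordCoeff (u : List α) (x : FreeAlgebra R α) : R :=
  (equivMonoidAlgebraFreeMonoid x).coeff (ofList u)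

@[simp]
lemma wordCoeff_sub (u : List α) (x y : FreeAlgebra R α) :
    wordCoeff u (x - y) = wordCoeff u x - wordCoeff u y := by
  simp [wordCoeff, MonoidAlgebra.coeff_sub]

lemma FreeAlgebra.equivMonoidAlgebraFreeMonoid_ι (a : α) :
    equivMonoidAlgebraFreeMonoid (ι R a) = MonoidAlgebra.single (of a) 1 := by
  simp [equivMonoidAlgebraFreeMonoid]

@[simp]
lemma wordCoeff_nil_ι_mul (a : α) (x : FreeAlgebra R α) : wordCoeff [] (ι R a * x) = 0 := by
  rw [wordCoeff, map_mul, equivMonoidAlgebraFreeMonoid_ι]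
  exact MonoidAlgebra.coeff_single_mul_of_forall_mul_ne _ _ fun d h => by
    simpa using congrArg toList h

@[simp]
lemma wordCoeff_cons_ι_mul [DecidableEq α] (a b : α) (u : List α) (x : FreeAlgebra R α) :
    wordCoeff (b :: u) (ι R a * x) = if a = b then wordCoeff u x else 0 := by
  rw [wordCoeff, map_mul, equivMonoidAlgebraFreeMonoid_ι]
  split_ifs with hab
  · subst hab
    rw [show ofList (a :: u) = of a * ofList u from rfl, MonoidAlgebra.coeff_single_mul_mul,
      one_mul, wordCoeff]
  · exact MonoidAlgebra.coeff_single_mul_of_forall_mul_ne _ _ fun d h =>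
      hab (List.cons.inj (congrArg toList h)).1

lemma wordCoeff_prod_ι_mul [DecidableEq α] (t u : List α) (x : FreeAlgebra R α) :
    wordCoeff u ((t.map (ι R)).prod * x) =
      if t <+: u then wordCoeff (u.drop t.length) x else 0 := by
  induction t generalizing u with
  | nil => simp
  | cons a t ih =>
    rcases u with _ | ⟨b, u⟩
    · simp [mul_assoc]
    · simp only [List.map_cons, List.prod_cons, mul_assoc, wordCoeff_cons_ι_mul, ih,
        List.cons_prefix_cons, List.length_cons, List.drop_succ_cons]
      split_ifs <;> tauto

lemma wordCoeff_one_ne_zero_iff [Nontrivial R] (u : List α) :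
    wordCoeff u (1 : FreeAlgebra R α) ≠ 0 ↔ u = [] := by
  classical
  rw [wordCoeff, map_one, MonoidAlgebra.one_def, MonoidAlgebra.coeff_single, Finsupp.single_apply,
    ← ofList_nil, ofList.injective.eq_iff]
  simp [eq_comm]

end WordCoeff

/-- The words in the expansion of `∏ᵢ [x_{rᵢ}, x_{sᵢ}]`: the `i`-th block of two letters is the
`i`-th pair of `rs`, in either order. -/
def IsBracketWord {α : Type*} : List (α × α) → List α → Prop
  | [], [] => True
  | p :: ps, a :: b :: w => ((a, b) = p ∨ (b, a) = p) ∧ IsBracketWord ps w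
  | _, _ => False

section IsBracketWord

variable {α : Type*}

lemma exists_isBracketWord (rs : List (α × α)) : ∃ w, IsBracketWord rs w := by
  induction rs with
  | nil => exact ⟨[], trivial⟩
  | cons p ps ih =>
    obtain ⟨w, hw⟩ := ih
    exact ⟨p.1 :: p.2 :: w, Or.inl rfl, hw⟩

lemma length_le_of_forall_isBracketWord {t t' : List α} {rs : List (α × α)} (hrs : rs ≠ [])
    (hne : ∀ p ∈ rs, p.1 ≠ p.2) (h : ∀ w, IsBracketWord rs w → t' <+: t ++ w) :
    t'.length ≤ t.length := by
  obtain ⟨p, ps, rfl⟩ := List.exists_cons_of_ne_nil hrs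
  obtain ⟨w, hw⟩ := exists_isBracketWord ps
  by_contra! hlt
  have h₁ := (h (p.1 :: p.2 :: w) ⟨Or.inl rfl, hw⟩).getElem hlt
  have h₂ := (h (p.2 :: p.1 :: w) ⟨Or.inr rfl, hw⟩).getElem hlt
  simp only [le_refl, List.getElem_append_right, tsub_self, List.getElem_cons_zero] at h₁ h₂
  exact hne p (by simp) (h₁.symm.trans h₂)

lemma IsBracketWord.unique [LinearOrder α] {rs rs' : List (α × α)} {w : List α}
    (hrs : ∀ p ∈ rs, p.1 < p.2) (hrs' : ∀ p ∈ rs', p.1 < p.2)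
    (h : IsBracketWord rs w) (h' : IsBracketWord rs' w) : rs = rs' := by
  induction rs generalizing rs' w with
  | nil => cases rs' <;> cases w <;> simp_all [IsBracketWord]
  | cons p ps ih =>
    rcases rs' with _ | ⟨p', ps'⟩
    · cases w <;> simp_all [IsBracketWord]
    rcases w with _ | ⟨a, _ | ⟨b, w⟩⟩ <;> simp only [IsBracketWord] at h h'
    have hp := hrs p (by simp)
    have hp' := hrs' p' (by simp)
    rw [ih (fun q hq => hrs q (by simp [hq])) (fun q hq => hrs' q (by simp [hq])) h.2 h'.2]
    congr 1
    grind

end IsBracketWord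

lemma wordCoeff_commutator_prod_ne_zero_iff {R α : Type*} [CommRing R] [Nontrivial R]
    {rs : List (α × α)} (hrs : ∀ p ∈ rs, p.1 ≠ p.2) (u : List α) :
    wordCoeff u (rs.map fun p => ι R p.1 * ι R p.2 - ι R p.2 * ι R p.1).prod ≠ 0 ↔
      IsBracketWord rs u := by
  classical
  induction rs generalizing u with
  | nil =>
    rw [List.map_nil, List.prod_nil, wordCoeff_one_ne_zero_iff]
    cases u <;> simp [IsBracketWord]
  | cons p ps ih =>
    have hp := hrs p (by simp)
    simp only [List.map_cons, List.prod_cons, sub_mul, mul_assoc, wordCoeff_sub]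
    rcases u with _ | ⟨a, _ | ⟨b, w⟩⟩
    · simp [IsBracketWord]
    · simp [IsBracketWord]
    · simp only [wordCoeff_cons_ι_mul, IsBracketWord, Prod.ext_iff]
      rw [← ih (fun q hq => hrs q (by simp [hq]))]
      split_ifs <;> grind

section BracketMonomial

variable {F : Type} [Field F] {t t' : List ℕ} {rs rs' : List (ℕ × ℕ)}

lemma isPrefix_of_wordCoeff_bracketMonomial_ne_zero {u : List ℕ}
    (h : wordCoeff u (bracketMonomial F t rs) ≠ 0) : t <+: u := by
  by_contra ht
  exact h (by rw [bracketMonomial, wordCoeff_prod_ι_mul, if_neg ht])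

lemma wordCoeff_bracketMonomial_append_ne_zero_iff (hrs : ∀ p ∈ rs, p.1 ≠ p.2) (w : List ℕ) :
    wordCoeff (t ++ w) (bracketMonomial F t rs) ≠ 0 ↔ IsBracketWord rs w := by
  rw [bracketMonomial, wordCoeff_prod_ι_mul, if_pos (List.prefix_append t w), List.drop_left,
    wordCoeff_commutator_prod_ne_zero_iff hrs]

lemma length_le_of_bracketMonomial_eq (hrs : rs ≠ []) (hne : ∀ p ∈ rs, p.1 ≠ p.2)
    (heq : bracketMonomial F t rs = bracketMonomial F t' rs') : t'.length ≤ t.length :=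
  length_le_of_forall_isBracketWord hrs hne fun w hw =>
    isPrefix_of_wordCoeff_bracketMonomial_ne_zero <|
      heq ▸ (wordCoeff_bracketMonomial_append_ne_zero_iff hne w).2 hw

end BracketMonomial

/-- If two bracket-monomials are equal in the free algebra, then they coincide. -/
theorem bracketMonomial_injective (F : Type) [Field F]
    (t t' : List ℕ) (rs rs' : List (ℕ × ℕ))
    (hk : rs ≠ []) (hk' : rs' ≠ [])
    (hlt : ∀ p ∈ rs, p.1 < p.2) (hlt' : ∀ p ∈ rs', p.1 < p.2)
    (heq : bracketMonomial F t rs = bracketMonomial F t' rs') :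
    t = t' ∧ rs = rs' := by
  have hne : ∀ p ∈ rs, p.1 ≠ p.2 := fun p hp => (hlt p hp).ne
  have hne' : ∀ p ∈ rs', p.1 ≠ p.2 := fun p hp => (hlt' p hp).ne
  have hlen : t'.length = t.length := le_antisymm (length_le_of_bracketMonomial_eq hk hne heq)
    (length_le_of_bracketMonomial_eq hk' hne' heq.symm)
  obtain ⟨w, hw⟩ := exists_isBracketWord rs
  have hcoeff : wordCoeff (t ++ w) (bracketMonomial F t' rs') ≠ 0 :=
    heq ▸ (wordCoeff_bracketMonomial_append_ne_zero_iff hne w).2 hw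
  obtain rfl : t' = t := (List.prefix_of_prefix_length_le
    (isPrefix_of_wordCoeff_bracketMonomial_ne_zero hcoeff) (List.prefix_append t w)
    hlen.le).eq_of_length hlen
  exact ⟨rfl, hw.unique hlt hlt'
    ((wordCoeff_bracketMonomial_append_ne_zero_iff hne' w).1 hcoeff)⟩
end

section
/- A bracket-monomial x_{t₁}⋯x_{t_l}[x_{r₁},x_{s₁}]⋯[x_{r_k},x_{s_k}] in F⟨X⟩ (with r_i < s_i for all i, k > 0) equals a linear combination of exactly 2^k pairwise distinct monomials in the free monoid ⟨X⟩, each with coefficient ±1. -/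
/-!
Write each bracket as `x_r x_s - x_s x_r` and expand the product: choosing one of the two
orders in every bracket yields `2 ^ k` words, each with sign `(-1) ^ (number of swapped
brackets)`. Since `r ≠ s`, the first letter of a bracket's two-letter block in the word tells
which order was chosen, so distinct choices give distinct words.
-/

open Function

section BracketExpansion

variable {X : Type*}

def pairWord (p : X × X) (c : Bool) : List X :=
  if c then [p.2, p.1] else [p.1, p.2]

def bracketWord : (rs : List (X × X)) → (Fin rs.length → Bool) → List X
  | [], _ => []
  | p :: rs, b => pairWord p (b 0) ++ bracketWord rs (Fin.tail b)

lemma pairWord_append_inj {p : X × X} (hp : p.1 ≠ p.2) {c c' : Bool} {u v : List X}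
    (h : pairWord p c ++ u = pairWord p c' ++ v) : c = c' ∧ u = v := by
  have hc : c = c' := by
    cases c <;> cases c' <;> simp_all [pairWord, eq_comm]
  subst hc
  exact ⟨rfl, List.append_cancel_left h⟩

lemma bracketWord_injective {rs : List (X × X)} (hrs : ∀ p ∈ rs, p.1 ≠ p.2) :
    Injective (bracketWord rs) := by
  induction rs with
  | nil => exact fun _ _ _ => Subsingleton.elim (α := Fin 0 → Bool) _ _
  | cons p rs ih =>
    intro b₁ b₂ h
    obtain ⟨h₀, htail⟩ := pairWord_append_inj (hrs p List.mem_cons_self) h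
    have htail := ih (fun q hq => hrs q (List.mem_cons_of_mem p hq)) htail
    rw [← Fin.cons_self_tail b₁, ← Fin.cons_self_tail b₂, h₀, htail]

variable {R A : Type*} [CommRing R] [Ring A] [Algebra R A] (f : X → A)

lemma commutator_eq_sum_pairWord (p : X × X) :
    f p.1 * f p.2 - f p.2 * f p.1 =
      ∑ c : Bool, (-1 : R) ^ c.toNat • ((pairWord p c).map f).prod := by
  simp [pairWord, sub_eq_neg_add]

theorem prod_commutator_eq_sum_bracketWord (rs : List (X × X)) :
    (rs.map fun p => f p.1 * f p.2 - f p.2 * f p.1).prod =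
      ∑ b : Fin rs.length → Bool,
        (-1 : R) ^ (∑ i, (b i).toNat) • ((bracketWord rs b).map f).prod := by
  induction rs with
  | nil => simp [bracketWord]
  | cons p rs ih =>
    rw [List.map_cons, List.prod_cons, ih, commutator_eq_sum_pairWord (R := R),
      Finset.sum_mul_sum, ← Fintype.sum_prod_type']
    refine Fintype.sum_equiv (Fin.consEquiv fun _ => Bool) _ _ fun ⟨c, b⟩ => ?_
    rw [smul_mul_smul]
    simp [bracketWord, Fin.consEquiv, Fin.sum_univ_succ, pow_add, List.prod_append]

end BracketExpansion

theorem bracketMonomial_eq_signed_sum_general (F : Type) [Field F]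
    (t : List ℕ) (rs : List (ℕ × ℕ)) (hlt : ∀ p ∈ rs, p.1 < p.2) :
    ∃ (w : Fin (2 ^ rs.length) → List ℕ) (ε : Fin (2 ^ rs.length) → F),
      Function.Injective w ∧ (∀ i, ε i = 1 ∨ ε i = -1) ∧
      bracketMonomial F t rs = ∑ i, ε i • ((w i).map (FreeAlgebra.ι F)).prod := by
  let e : (Fin rs.length → Bool) ≃ Fin (2 ^ rs.length) := Fintype.equivFinOfCardEq (by simp)
  refine ⟨fun i => t ++ bracketWord rs (e.symm i), fun i => (-1) ^ ∑ j, (e.symm i j).toNat,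
    (List.append_right_injective t).comp <|
      (bracketWord_injective fun p hp => (hlt p hp).ne).comp e.symm.injective,
    fun i => neg_one_pow_eq_or F _, ?_⟩
  rw [bracketMonomial, prod_commutator_eq_sum_bracketWord (R := F), Finset.mul_sum]
  refine Fintype.sum_equiv e _ _ fun b => ?_
  simp [List.prod_append]

/-- A bracket-monomial with `k` brackets is a (±1)-linear combination of exactly
`2 ^ k` pairwise distinct monomials of the free monoid. -/
theorem bracketMonomial_eq_signed_sum (F : Type) [Field F]
    (t : List ℕ) (rs : List (ℕ × ℕ)) (hk : rs ≠ []) (hlt : ∀ p ∈ rs, p.1 < p.2) :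
    ∃ (w : Fin (2 ^ rs.length) → List ℕ) (ε : Fin (2 ^ rs.length) → F),
      Function.Injective w ∧ (∀ i, ε i = 1 ∨ ε i = -1) ∧
      bracketMonomial F t rs = ∑ i, ε i • ((w i).map (FreeAlgebra.ι F)).prod :=
  bracketMonomial_eq_signed_sum_general F t rs hlt
end

section
/- In the ideal I of F⟨X⟩ generated by all substitutions of distinct variables into Γ₃, St₃, T₄, one has Γ_m(x₁,…,x_m) ∈ I for every m ≥ 3, where Γ_m(x₁,…,x_m) = [[x₁,x₂], x₃⋯x_m]. In particular, the L-ideal generated by {Γ_m (m ≥ 3), St₃, T₄} equals I. -/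
open FreeAlgebra

/-- Γ₃(x_i, x_j, x_k) = [[x_i, x_j], x_k] in the free algebra. -/
noncomputable def Gamma3 (F : Type) [Field F] (i j k : ℕ) : FreeAlgebra F ℕ :=
  (ι F i * ι F j - ι F j * ι F i) * ι F k - ι F k * (ι F i * ι F j - ι F j * ι F i)

/-- St₃(x_i, x_j, x_k) = x_i[x_j,x_k] - x_j[x_i,x_k] + x_k[x_i,x_j]. -/
noncomputable def St3 (F : Type) [Field F] (i j k : ℕ) : FreeAlgebra F ℕ :=
  ι F i * (ι F j * ι F k - ι F k * ι F j) - ι F j * (ι F i * ι F k - ι F k * ι F i) +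
    ι F k * (ι F i * ι F j - ι F j * ι F i)

/-- T₄(x_i, x_j, x_k, x_l) = [x_i,x_j][x_k,x_l] - [x_i,x_k][x_j,x_l] + [x_j,x_k][x_i,x_l]. -/
noncomputable def T4 (F : Type) [Field F] (i j k l : ℕ) : FreeAlgebra F ℕ :=
  (ι F i * ι F j - ι F j * ι F i) * (ι F k * ι F l - ι F l * ι F k) -
    (ι F i * ι F k - ι F k * ι F i) * (ι F j * ι F l - ι F l * ι F j) +
    (ι F j * ι F k - ι F k * ι F j) * (ι F i * ι F l - ι F l * ι F i)

/-- The generators of the ideal `I`: all substitutions of variables into Γ₃, St₃, T₄. -/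
def weakGen (F : Type) [Field F] : Set (FreeAlgebra F ℕ) :=
  {g | (∃ i j k, g = Gamma3 F i j k) ∨ (∃ i j k, g = St3 F i j k) ∨
      (∃ i j k l, g = T4 F i j k l)}

/-- The two-sided ideal `I` of the free algebra generated by all substitutions of
variables into Γ₃, St₃, T₄, realized as the span of `a * g * b`. -/
noncomputable def weakIdeal (F : Type) [Field F] : Submodule F (FreeAlgebra F ℕ) :=
  Submodule.span F {x | ∃ (a : FreeAlgebra F ℕ) (g : FreeAlgebra F ℕ) (b : FreeAlgebra F ℕ),
    g ∈ weakGen F ∧ x = a * g * b}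

/-- Γ_m(x_{v 1},…,x_{v m}) = [[x_{v 1},x_{v 2}], x_{v 3}⋯x_{v m}] for a substitution . -/
noncomputable def GammaM (F : Type) [Field F] (m : ℕ) (v : ℕ → ℕ) : FreeAlgebra F ℕ :=
  (ι F (v 1) * ι F (v 2) - ι F (v 2) * ι F (v 1)) *
      (((List.Ico 3 (m + 1)).map fun i => ι F (v i)).prod) -
    (((List.Ico 3 (m + 1)).map fun i => ι F (v i)).prod) *
      (ι F (v 1) * ι F (v 2) - ι F (v 2) * ι F (v 1))

/-! For `c = [x₁, x₂]`, the map `[c, -]` is a derivation, so `[c, x₃⋯x_m]` is a sum of terms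
`x₃⋯x_{k-1} [c, x_k] x_{k+1}⋯x_m`, each lying in `I` because `[c, x_k] = Γ₃(x₁, x₂, x_k)`.
Conversely `Γ₃` is `Γ_m` for `m = 3`, so together with `St₃` and `T₄` both families generate
the same ideal. -/

section SandwichSpan

variable (R : Type*) {A : Type*} [CommRing R] [Ring A] [Algebra R A]

/-- The two-sided ideal generated by `S`, as an `R`-submodule. -/
def sandwichSpan (S : Set A) : Submodule R A :=
  Submodule.span R {x | ∃ a g b, g ∈ S ∧ x = a * g * b}

variable {R} {S T : Set A}

theorem subset_sandwichSpan : S ⊆ sandwichSpan R S := fun g hg =>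
  Submodule.subset_span ⟨1, g, 1, hg, by rw [one_mul, mul_one]⟩

theorem sandwichSpan.mul_mem_left (y : A) {x : A} (hx : x ∈ sandwichSpan R S) :
    y * x ∈ sandwichSpan R S := by
  induction hx using Submodule.span_induction with
  | mem x hx =>
    obtain ⟨a, g, b, hg, rfl⟩ := hx
    exact Submodule.subset_span ⟨y * a, g, b, hg, by simp only [mul_assoc]⟩
  | zero => simp only [mul_zero, Submodule.zero_mem]
  | add a b _ _ ha hb => rw [mul_add]; exact add_mem ha hb
  | smul c a _ ha => rw [mul_smul_comm]; exact Submodule.smul_mem _ c ha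

theorem sandwichSpan.mul_mem_right (y : A) {x : A} (hx : x ∈ sandwichSpan R S) :
    x * y ∈ sandwichSpan R S := by
  induction hx using Submodule.span_induction with
  | mem x hx =>
    obtain ⟨a, g, b, hg, rfl⟩ := hx
    exact Submodule.subset_span ⟨a, g, b * y, hg, by simp only [mul_assoc]⟩
  | zero => simp only [zero_mul, Submodule.zero_mem]
  | add a b _ _ ha hb => rw [add_mul]; exact add_mem ha hb
  | smul c a _ ha => rw [smul_mul_assoc]; exact Submodule.smul_mem _ c ha

theorem sandwichSpan_le_sandwichSpan (h : S ⊆ sandwichSpan R T) :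
    sandwichSpan R S ≤ sandwichSpan R T := by
  rw [sandwichSpan, Submodule.span_le]
  rintro x ⟨a, g, b, hg, rfl⟩
  exact sandwichSpan.mul_mem_right b (sandwichSpan.mul_mem_left a (h hg))

theorem mul_list_prod_sub_list_prod_mul_mem (c : A) (l : List A)
    (hl : ∀ x ∈ l, c * x - x * c ∈ sandwichSpan R S) :
    c * l.prod - l.prod * c ∈ sandwichSpan R S := by
  induction l with
  | nil => simp only [List.prod_nil, mul_one, one_mul, sub_self, Submodule.zero_mem]
  | cons x t ih =>
    have leibniz : c * (x * t.prod) - x * t.prod * c =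
        (c * x - x * c) * t.prod + x * (c * t.prod - t.prod * c) := by noncomm_ring
    rw [List.prod_cons, leibniz]
    exact add_mem (sandwichSpan.mul_mem_right _ (hl x List.mem_cons_self))
      (sandwichSpan.mul_mem_left _ (ih fun y hy => hl y (List.mem_cons_of_mem x hy)))

end SandwichSpan

theorem weakIdeal_eq_sandwichSpan (F : Type) [Field F] :
    weakIdeal F = sandwichSpan F (weakGen F) := rfl

theorem GammaM_mem_weakIdeal_of_subst (F : Type) [Field F] (m : ℕ) (v : ℕ → ℕ) :
    GammaM F m v ∈ weakIdeal F := by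
  refine mul_list_prod_sub_list_prod_mul_mem _ _ fun x hx => ?_
  obtain ⟨i, -, rfl⟩ := List.mem_map.mp hx
  exact subset_sandwichSpan (Or.inl ⟨v 1, v 2, v i, rfl⟩)

theorem GammaM_three (F : Type) [Field F] (v : ℕ → ℕ) :
    GammaM F 3 v = Gamma3 F (v 1) (v 2) (v 3) := by
  simp [GammaM, Gamma3]

/-- Γ_m ∈ I for every m ≥ 3, and the ideal generated by all substitutions of
{Γ_m (m ≥ 3), St₃, T₄} coincides with I. -/
theorem GammaM_mem_weakIdeal (F : Type) [Field F] :
    (∀ m : ℕ, 3 ≤ m → GammaM F m id ∈ weakIdeal F) ∧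
    Submodule.span F {x : FreeAlgebra F ℕ | ∃ a g b, ((∃ m ≥ 3, ∃ v : ℕ → ℕ, g = GammaM F m v) ∨
        (∃ i j k, g = St3 F i j k) ∨ (∃ i j k l, g = T4 F i j k l)) ∧ x = a * g * b} =
      weakIdeal F := by
  refine ⟨fun m _ => GammaM_mem_weakIdeal_of_subst F m id, ?_⟩
  change sandwichSpan F _ = _
  rw [weakIdeal_eq_sandwichSpan]
  apply le_antisymm <;> apply sandwichSpan_le_sandwichSpan
  · rintro g (⟨m, -, v, rfl⟩ | hSt | hT)
    · exact GammaM_mem_weakIdeal_of_subst F m v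
    · exact subset_sandwichSpan (Or.inr (Or.inl hSt))
    · exact subset_sandwichSpan (Or.inr (Or.inr hT))
  · rintro g (⟨i, j, k, rfl⟩ | hSt | hT)
    · let v : ℕ → ℕ := fun n => if n = 1 then i else if n = 2 then j else k
      have hv : GammaM F 3 v = Gamma3 F i j k := GammaM_three F v
      exact subset_sandwichSpan (Or.inl ⟨3, le_rfl, v, hv.symm⟩)
    · exact subset_sandwichSpan (Or.inr (Or.inl hSt))
    · exact subset_sandwichSpan (Or.inr (Or.inr hT))
end

section
/- Modulo the ideal I generated by Γ₃, St₃, T₄ (under all variable substitutions), for all f₁, f₂ ∈ F⟨X⟩ and indices i < j: f₁ x_j x_i f₂ ≡ f₁ x_i x_j f₂ - f₁ f₂ [x_i, x_j] (mod I). -/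
open FreeAlgebra

/-!
Γ₃ says that `[x_i, x_j]` commutes with every letter modulo `I`. The elements commuting with a
fixed `c` modulo a two-sided ideal form a subalgebra, so `[x_i, x_j]` is central modulo `I`, and
`f₁ x_j x_i f₂ = f₁ x_i x_j f₂ - f₁ [x_i, x_j] f₂ ≡ f₁ x_i x_j f₂ - f₁ f₂ [x_i, x_j]`.
-/

section SandwichSpan

variable {R A : Type*} [CommSemiring R] [Semiring A] [Algebra R A] {S : Set A}

theorem mul_mem_span_sandwich {x : A}
    (hx : x ∈ Submodule.span R {y | ∃ a g b, g ∈ S ∧ y = a * g * b}) (c : A) :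
    c * x ∈ Submodule.span R {y | ∃ a g b, g ∈ S ∧ y = a * g * b} := by
  induction hx using Submodule.span_induction with
  | mem y hy =>
    obtain ⟨a, g, b, hg, rfl⟩ := hy
    exact Submodule.subset_span ⟨c * a, g, b, hg, by simp only [mul_assoc]⟩
  | zero => simp
  | add y z _ _ hy hz => simpa only [mul_add] using Submodule.add_mem _ hy hz
  | smul r y _ hy => simpa only [mul_smul_comm] using Submodule.smul_mem _ r hy

theorem mem_span_sandwich_mul {x : A}
    (hx : x ∈ Submodule.span R {y | ∃ a g b, g ∈ S ∧ y = a * g * b}) (c : A) :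
    x * c ∈ Submodule.span R {y | ∃ a g b, g ∈ S ∧ y = a * g * b} := by
  induction hx using Submodule.span_induction with
  | mem y hy =>
    obtain ⟨a, g, b, hg, rfl⟩ := hy
    exact Submodule.subset_span ⟨a, g, b * c, hg, by simp only [mul_assoc]⟩
  | zero => simp
  | add y z _ _ hy hz => simpa only [add_mul] using Submodule.add_mem _ hy hz
  | smul r y _ hy => simpa only [smul_mul_assoc] using Submodule.smul_mem _ r hy

end SandwichSpan

theorem FreeAlgebra.commutator_mem_of_forall_ι {R X : Type*} [CommRing R]
    (I : Submodule R (FreeAlgebra R X))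
    (mul_mem : ∀ a x, x ∈ I → a * x ∈ I) (mem_mul : ∀ a x, x ∈ I → x * a ∈ I)
    (c : FreeAlgebra R X) (hc : ∀ k, c * ι R k - ι R k * c ∈ I) (f : FreeAlgebra R X) :
    c * f - f * c ∈ I := by
  induction f using FreeAlgebra.induction with
  | grade0 r => simp [Algebra.commutes]
  | grade1 k => exact hc k
  | add a b ha hb =>
    have hab : c * (a + b) - (a + b) * c = (c * a - a * c) + (c * b - b * c) := by noncomm_ring
    exact hab ▸ I.add_mem ha hb
  | mul a b ha hb =>
    -- Leibniz rule for the inner derivation `[c, ·]`.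
    have hab : c * (a * b) - a * b * c = (c * a - a * c) * b + a * (c * b - b * c) := by
      noncomm_ring
    exact hab ▸ I.add_mem (mem_mul b _ ha) (mul_mem a _ hb)

theorem commutator_central_mod_weakIdeal (F : Type) [Field F] (i j : ℕ) (f : FreeAlgebra F ℕ) :
    (ι F i * ι F j - ι F j * ι F i) * f - f * (ι F i * ι F j - ι F j * ι F i) ∈
      weakIdeal F :=
  commutator_mem_of_forall_ι (weakIdeal F) (fun a _ hx => mul_mem_span_sandwich hx a)
    (fun a _ hx => mem_span_sandwich_mul hx a) _
    (fun k => Submodule.subset_span ⟨1, Gamma3 F i j k, 1, Or.inl ⟨i, j, k, rfl⟩,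
      by rw [one_mul, mul_one, Gamma3]⟩) f

theorem swap_letters_mod_weakIdeal_general (F : Type) [Field F]
    (f₁ f₂ : FreeAlgebra F ℕ) (i j : ℕ) :
    f₁ * ι F j * ι F i * f₂ -
      (f₁ * ι F i * ι F j * f₂ - f₁ * f₂ * (ι F i * ι F j - ι F j * ι F i)) ∈
      weakIdeal F := by
  have hcentral := commutator_central_mod_weakIdeal F i j f₂
  have hswap : f₁ * ι F j * ι F i * f₂ -
      (f₁ * ι F i * ι F j * f₂ - f₁ * f₂ * (ι F i * ι F j - ι F j * ι F i)) =
      -(f₁ * ((ι F i * ι F j - ι F j * ι F i) * f₂ - f₂ * (ι F i * ι F j - ι F j * ι F i))) := by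
    noncomm_ring
  exact hswap ▸ (weakIdeal F).neg_mem (mul_mem_span_sandwich hcentral f₁)

/-- Modulo I: f₁ x_j x_i f₂ ≡ f₁ x_i x_j f₂ - f₁ f₂ [x_i, x_j]. -/
theorem swap_letters_mod_weakIdeal (F : Type) [Field F]
    (f₁ f₂ : FreeAlgebra F ℕ) (i j : ℕ) (hij : i < j) :
    f₁ * ι F j * ι F i * f₂ -
      (f₁ * ι F i * ι F j * f₂ - f₁ * f₂ * (ι F i * ι F j - ι F j * ι F i)) ∈
      weakIdeal F :=
  swap_letters_mod_weakIdeal_general F f₁ f₂ i j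
end

section
/- If char F = 0, the center of the Weyl algebra A₁ is F·1; if char F = p > 0, the center of A₁ is F[x^p, y^p]. -/
namespace WeylAux
variable (F : Type) [Field F]

theorem yx : Wy F * Wx F = Wx F * Wy F + 1 := by
  have := RingQuot.mkAlgHom_rel F (WeylRel.rel (F := F))
  simpa [Wx, Wy, map_mul, map_add, map_one] using this

theorem yxn (n : ℕ) : Wy F * Wx F ^ n = Wx F ^ n * Wy F + (n : F) • Wx F ^ (n - 1) := by
  induction n with
  | zero => simp
  | succ k ih =>
    have h1 : Wy F * Wx F ^ (k+1) = (Wy F * Wx F ^ k) * Wx F := by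
      rw [pow_succ, mul_assoc]
    rw [h1, ih, add_mul, mul_assoc, yx, smul_mul_assoc]
    have h2 : (k : F) • (Wx F ^ (k-1) * Wx F) = (k : F) • Wx F ^ k := by
      cases k with
      | zero => simp
      | succ m => rw [Nat.succ_sub_one, ← pow_succ]
    rw [h2]
    push_cast
    rw [mul_add, mul_one, ← mul_assoc, ← pow_succ, add_smul, one_smul]
    abel

theorem ynx (n : ℕ) : Wy F ^ n * Wx F = Wx F * Wy F ^ n + (n : F) • Wy F ^ (n - 1) := by
  induction n with
  | zero => simp
  | succ k ih =>
    have h1 : Wy F ^ (k+1) * Wx F = Wy F * (Wy F ^ k * Wx F) := by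
      rw [pow_succ', mul_assoc]
    rw [h1, ih, mul_add, ← mul_assoc, yx, mul_smul_comm]
    have h2 : (k : F) • (Wy F * Wy F ^ (k-1)) = (k : F) • Wy F ^ k := by
      cases k with
      | zero => simp
      | succ m => rw [Nat.succ_sub_one, ← pow_succ']
    rw [h2]
    push_cast
    rw [add_mul, one_mul, mul_assoc, ← pow_succ', add_smul, one_smul]
    abel


/-- Monomials `x^i y^j`. -/
noncomputable def M (ij : ℕ × ℕ) : Weyl F := Wx F ^ ij.1 * Wy F ^ ij.2

theorem M_zero : M F (0, 0) = 1 := by simp [M]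

theorem comm_y (ij : ℕ × ℕ) :
    Wy F * M F ij = M F ij * Wy F + (ij.1 : F) • M F (ij.1 - 1, ij.2) := by
  obtain ⟨i, j⟩ := ij
  show Wy F * (Wx F ^ i * Wy F ^ j) = _
  rw [← mul_assoc, yxn, add_mul, smul_mul_assoc]
  simp only [M, mul_assoc]
  rw [← pow_succ', ← pow_succ]

theorem comm_x (ij : ℕ × ℕ) :
    M F ij * Wx F = Wx F * M F ij + (ij.2 : F) • M F (ij.1, ij.2 - 1) := by
  obtain ⟨i, j⟩ := ij
  show Wx F ^ i * Wy F ^ j * Wx F = _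
  rw [mul_assoc, ynx, mul_add, mul_smul_comm]
  simp only [M, mul_assoc, ← mul_assoc]
  rw [← pow_succ, ← pow_succ']

theorem range_pair {α : Type*} (g : Fin 2 → α) : Set.range g = {g 0, g 1} := by
  ext a
  constructor
  · rintro ⟨i, rfl⟩; fin_cases i <;> simp
  · rintro (rfl | rfl)
    · exact ⟨0, rfl⟩
    · exact ⟨1, rfl⟩

theorem adjoin_xy : Algebra.adjoin F {Wx F, Wy F} = ⊤ := by
  have h1 : Algebra.adjoin F (Set.range (FreeAlgebra.ι F (X := Fin 2))) = ⊤ :=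
    FreeAlgebra.adjoin_range_ι F (Fin 2)
  have h2 := congrArg (Subalgebra.map (RingQuot.mkAlgHom F (WeylRel F))) h1
  rw [AlgHom.map_adjoin, Algebra.map_top] at h2
  rw [(AlgHom.range_eq_top _).2 (RingQuot.mkAlgHom_surjective F _)] at h2
  rw [← Set.range_comp] at h2
  rw [range_pair ((RingQuot.mkAlgHom F (WeylRel F) : FreeAlgebra F (Fin 2) →ₐ[F] Weyl F) ∘ FreeAlgebra.ι F)] at h2
  exact h2

/-- The span of the monomials. -/
noncomputable def P : Submodule F (Weyl F) := Submodule.span F (Set.range (M F))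

theorem M_mem_P (ij : ℕ × ℕ) : M F ij ∈ P F := Submodule.subset_span ⟨ij, rfl⟩

theorem P_mul_x {v : Weyl F} (hv : v ∈ P F) : v * Wx F ∈ P F := by
  induction hv using Submodule.span_induction with
  | mem w hw =>
    obtain ⟨ij, rfl⟩ := hw
    rw [comm_x]
    refine add_mem ?_ (Submodule.smul_mem _ _ (M_mem_P F _))
    have : Wx F * M F ij = M F (ij.1 + 1, ij.2) := by
      simp [M, pow_succ', mul_assoc]
    rw [this]; exact M_mem_P F _
  | zero => simpa using Submodule.zero_mem _
  | add a b _ _ ha hb => rw [add_mul]; exact add_mem ha hb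
  | smul r a _ ha => rw [smul_mul_assoc]; exact Submodule.smul_mem _ _ ha

theorem P_mul_y {v : Weyl F} (hv : v ∈ P F) : v * Wy F ∈ P F := by
  induction hv using Submodule.span_induction with
  | mem w hw =>
    obtain ⟨ij, rfl⟩ := hw
    have : M F ij * Wy F = M F (ij.1, ij.2 + 1) := by
      simp [M, pow_succ, mul_assoc]
    rw [this]; exact M_mem_P F _
  | zero => simpa using Submodule.zero_mem _
  | add a b _ _ ha hb => rw [add_mul]; exact add_mem ha hb
  | smul r a _ ha => rw [smul_mul_assoc]; exact Submodule.smul_mem _ _ ha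

/-- The set of elements that multiply `P` into itself, as a subalgebra. -/
noncomputable def Q : Subalgebra F (Weyl F) where
  carrier := {w | ∀ v ∈ P F, v * w ∈ P F}
  mul_mem' := fun {a b} ha hb v hv => by
    rw [← mul_assoc]; exact hb _ (ha _ hv)
  one_mem' := fun v hv => by rwa [mul_one]
  add_mem' := fun {a b} ha hb v hv => by
    rw [mul_add]; exact add_mem (ha _ hv) (hb _ hv)
  zero_mem' := fun v hv => by rw [mul_zero]; exact Submodule.zero_mem _
  algebraMap_mem' := fun r v hv => by
    rw [← Algebra.commutes r v, ← Algebra.smul_def]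
    exact Submodule.smul_mem _ _ hv

theorem mem_P (w : Weyl F) : w ∈ P F := by
  have hQ : Algebra.adjoin F {Wx F, Wy F} ≤ Q F := by
    apply Algebra.adjoin_le
    rintro a (rfl | rfl)
    · exact fun v hv => P_mul_x F hv
    · exact fun v hv => P_mul_y F hv
  have : w ∈ Q F := by
    rw [adjoin_xy] at hQ
    exact hQ (by trivial)
  simpa using this 1 (M_zero F ▸ M_mem_P F (0, 0))


open MvPolynomial

/-- `x` acts as multiplication by `X 0`. -/
noncomputable def Aop : Module.End F (MvPolynomial (Fin 2) F) :=
  LinearMap.mulLeft F (X 0)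

/-- `y` acts as multiplication by `X 1` plus `∂/∂(X 0)`. -/
noncomputable def Bop : Module.End F (MvPolynomial (Fin 2) F) :=
  LinearMap.mulLeft F (X 1) + (pderiv 0).toLinearMap

theorem BA_rel : Bop F * Aop F = Aop F * Bop F + 1 := by
  apply LinearMap.ext; intro v
  simp only [Module.End.mul_apply, LinearMap.add_apply, Module.End.one_apply, Aop, Bop,
    LinearMap.mulLeft_apply, Derivation.coeFn_coe, pderiv_mul, pderiv_X_self, one_mul]
  ring

/-- The representation of the Weyl algebra. -/
noncomputable def rho : Weyl F →ₐ[F] Module.End F (MvPolynomial (Fin 2) F) :=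
  RingQuot.liftAlgHom F ⟨FreeAlgebra.lift F ![Aop F, Bop F], by
    rintro a b ⟨⟩
    simp only [map_mul, map_add, map_one, FreeAlgebra.lift_ι_apply,
      Matrix.cons_val_zero, Matrix.cons_val_one, Matrix.head_cons]
    exact BA_rel F⟩

theorem rho_x : rho F (Wx F) = Aop F := by
  rw [Wx, rho, RingQuot.liftAlgHom_mkAlgHom_apply]
  simp [FreeAlgebra.lift_ι_apply]

theorem rho_y : rho F (Wy F) = Bop F := by
  rw [Wy, rho, RingQuot.liftAlgHom_mkAlgHom_apply]
  simp [FreeAlgebra.lift_ι_apply]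

/-- Evaluation of the representation at the constant polynomial `1`. -/
noncomputable def T : Weyl F →ₗ[F] MvPolynomial (Fin 2) F :=
  (LinearMap.applyₗ (1 : MvPolynomial (Fin 2) F)).comp (rho F).toLinearMap

theorem T_apply (w : Weyl F) : T F w = rho F w 1 := rfl

theorem Bop_pow_one (j : ℕ) : (Bop F ^ j) 1 = X 1 ^ j := by
  induction j with
  | zero => simp
  | succ k ih =>
    rw [pow_succ', Module.End.mul_apply, ih]
    simp only [Bop, LinearMap.add_apply, LinearMap.mulLeft_apply,
      Derivation.coeFn_coe, pderiv_pow, pderiv_X_of_ne (by decide : (1 : Fin 2) ≠ 0)]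
    rw [← pow_succ']
    ring

/-- The polynomial monomials. -/
noncomputable def N (ij : ℕ × ℕ) : MvPolynomial (Fin 2) F := X 0 ^ ij.1 * X 1 ^ ij.2

theorem T_M (ij : ℕ × ℕ) : T F (M F ij) = N F ij := by
  rw [T_apply, M, map_mul, map_pow, map_pow, rho_x, rho_y]
  rw [Module.End.mul_apply, Bop_pow_one, Aop, LinearMap.pow_mulLeft, LinearMap.mulLeft_apply]
  rfl

/-- Exponent function for monomials. -/
noncomputable def e (ij : ℕ × ℕ) : Fin 2 →₀ ℕ := Finsupp.single 0 ij.1 + Finsupp.single 1 ij.2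

theorem N_eq (ij : ℕ × ℕ) : N F ij = monomial (e ij) 1 := by
  rw [N, X_pow_eq_monomial, X_pow_eq_monomial, monomial_mul, one_mul, e]

theorem e_zero (ij : ℕ × ℕ) : e ij 0 = ij.1 := by
  simp [e, Finsupp.single_apply]

theorem e_one (ij : ℕ × ℕ) : e ij 1 = ij.2 := by
  simp [e, Finsupp.single_apply]

theorem coeff_N (ab ij : ℕ × ℕ) :
    coeff (e ab) (N F ij) = if ij = ab then 1 else 0 := by
  rw [N_eq, coeff_monomial]
  congr 1
  simp only [eq_iff_iff]
  constructor
  · intro h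
    have h0 := congrArg (fun f => f 0) h
    have h1 := congrArg (fun f => f 1) h
    simp only [e_zero, e_one] at h0 h1
    exact Prod.ext h0 h1
  · rintro rfl; rfl


theorem key_y (c : ℕ × ℕ →₀ F)
    (h : (c.sum fun ij a => (a * (ij.1 : F)) • N F (ij.1 - 1, ij.2)) = 0) (i j : ℕ) :
    (i : F) * c (i, j) = 0 := by
  cases i with
  | zero => simp
  | succ i =>
    have h2 := congrArg (lcoeff F (e (i, j))) h
    rw [map_zero, map_finsuppSum] at h2
    simp only [map_smul, lcoeff_apply, coeff_N, smul_eq_mul] at h2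
    rw [Finsupp.sum, Finset.sum_eq_single ((i + 1 : ℕ), j)] at h2
    · rw [if_pos (by simp)] at h2
      push_cast at h2 ⊢
      rw [mul_one, mul_comm] at h2
      exact h2
    · rintro ⟨bi, bj⟩ _ hbne
      cases bi with
      | zero => simp
      | succ m =>
        rw [if_neg, mul_zero]
        intro hcon
        rw [Prod.mk.injEq, Nat.succ_sub_one] at hcon
        exact hbne (by rw [Prod.mk.injEq]; exact ⟨by rw [hcon.1], hcon.2⟩)
    · intro hns
      rw [Finsupp.notMem_support_iff.1 hns, zero_mul, zero_mul]

theorem key_x (c : ℕ × ℕ →₀ F)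
    (h : (c.sum fun ij a => (a * (ij.2 : F)) • N F (ij.1, ij.2 - 1)) = 0) (i j : ℕ) :
    (j : F) * c (i, j) = 0 := by
  cases j with
  | zero => simp
  | succ j =>
    have h2 := congrArg (lcoeff F (e (i, j))) h
    rw [map_zero, map_finsuppSum] at h2
    simp only [map_smul, lcoeff_apply, coeff_N, smul_eq_mul] at h2
    rw [Finsupp.sum, Finset.sum_eq_single (i, (j + 1 : ℕ))] at h2
    · rw [if_pos (by simp)] at h2
      push_cast at h2 ⊢
      rw [mul_one, mul_comm] at h2
      exact h2
    · rintro ⟨bi, bj⟩ _ hbne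
      cases bj with
      | zero => simp
      | succ m =>
        rw [if_neg, mul_zero]
        intro hcon
        rw [Prod.mk.injEq, Nat.succ_sub_one] at hcon
        exact hbne (by rw [Prod.mk.injEq]; exact ⟨hcon.1, by rw [hcon.2]⟩)
    · intro hns
      rw [Finsupp.notMem_support_iff.1 hns, zero_mul, zero_mul]

theorem central_coeffs (z : Weyl F) (hz : ∀ b, b * z = z * b)
    (c : ℕ × ℕ →₀ F) (hc : (c.sum fun ij a => a • M F ij) = z) :
    ∀ i j : ℕ, (i : F) * c (i, j) = 0 ∧ (j : F) * c (i, j) = 0 := by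
  have hy : (c.sum fun ij a => (a * (ij.1 : F)) • M F (ij.1 - 1, ij.2)) = 0 := by
    have h0 : Wy F * z - z * Wy F = 0 := by rw [hz (Wy F), sub_self]
    rw [← hc, Finsupp.mul_sum, Finsupp.sum_mul, ← Finsupp.sum_sub] at h0
    rw [← h0]
    apply Finsupp.sum_congr
    intro ij _
    rw [mul_smul_comm, smul_mul_assoc, comm_y, smul_add, add_sub_cancel_left, smul_smul]
  have hx : (c.sum fun ij a => (a * (ij.2 : F)) • M F (ij.1, ij.2 - 1)) = 0 := by
    have h0 : z * Wx F - Wx F * z = 0 := by rw [hz (Wx F), sub_self]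
    rw [← hc, Finsupp.mul_sum, Finsupp.sum_mul, ← Finsupp.sum_sub] at h0
    rw [← h0]
    apply Finsupp.sum_congr
    intro ij _
    rw [mul_smul_comm, smul_mul_assoc, comm_x, smul_add, add_sub_cancel_left, smul_smul]
  have hyN : (c.sum fun ij a => (a * (ij.1 : F)) • N F (ij.1 - 1, ij.2)) = 0 := by
    have := congrArg (T F) hy
    rw [map_zero, map_finsuppSum] at this
    rw [← this]
    apply Finsupp.sum_congr
    intro ij _
    rw [map_smul, T_M]
  have hxN : (c.sum fun ij a => (a * (ij.2 : F)) • N F (ij.1, ij.2 - 1)) = 0 := by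
    have := congrArg (T F) hx
    rw [map_zero, map_finsuppSum] at this
    rw [← this]
    apply Finsupp.sum_congr
    intro ij _
    rw [map_smul, T_M]
  exact fun i j => ⟨key_y F c hyN i j, key_x F c hxN i j⟩

theorem commutes_of_gen {z : Weyl F} (hx : Wx F * z = z * Wx F)
    (hy : Wy F * z = z * Wy F) : ∀ b : Weyl F, b * z = z * b := by
  intro b
  have hle : Algebra.adjoin F {Wx F, Wy F} ≤ Subalgebra.centralizer F {z} := by
    apply Algebra.adjoin_le
    rintro a (rfl | rfl) <;>
      refine SetLike.mem_coe.2 ((Subalgebra.mem_centralizer_iff F).2 ?_) <;>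
      rintro g rfl
    · exact hx.symm
    · exact hy.symm
  rw [adjoin_xy] at hle
  have hb : b ∈ Subalgebra.centralizer F {z} := hle (by trivial)
  exact ((Subalgebra.mem_centralizer_iff F).1 hb z rfl).symm

end WeylAux

set_option maxHeartbeats 1000000 in
/-- The center of the Weyl algebra: it is F·1 in characteristic zero, and
F[x^p, y^p] in characteristic p > 0. -/
theorem weyl_center (F : Type) [Field F] :
    (CharZero F → Subalgebra.center F (Weyl F) = ⊥) ∧
    (∀ p : ℕ, p ≠ 0 → CharP F p →
      Subalgebra.center F (Weyl F) = Algebra.adjoin F {Wx F ^ p, Wy F ^ p}) := by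
  constructor
  · intro hchar
    rw [eq_bot_iff]
    intro z hz
    have hzc := Subalgebra.mem_center_iff.1 hz
    obtain ⟨c, hc⟩ := Finsupp.mem_span_range_iff_exists_finsupp.1 (WeylAux.mem_P F z)
    have hcc := WeylAux.central_coeffs F z hzc c hc
    have hsupp : ∀ ij : ℕ × ℕ, ij ≠ (0, 0) → c ij = 0 := by
      rintro ⟨i, j⟩ hne
      rcases Nat.eq_zero_or_pos i with rfl | hi
      · rcases Nat.eq_zero_or_pos j with rfl | hj
        · exact absurd rfl hne
        · have h := (hcc 0 j).2
          have hj' : (j : F) ≠ 0 := Nat.cast_ne_zero.2 (Nat.pos_iff_ne_zero.1 hj)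
          exact (mul_eq_zero.1 h).resolve_left hj'
      · have h := (hcc i j).1
        have hi' : (i : F) ≠ 0 := Nat.cast_ne_zero.2 (Nat.pos_iff_ne_zero.1 hi)
        exact (mul_eq_zero.1 h).resolve_left hi'
    obtain ⟨v, hv⟩ : ∃ v : F, z = v • 1 := by
      refine ⟨c (0, 0), ?_⟩
      rw [← hc, Finsupp.sum, Finset.sum_eq_single ((0, 0) : ℕ × ℕ)]
      · rw [WeylAux.M_zero]
      · intro b _ hbne; rw [hsupp b hbne, zero_smul]
      · intro h0; rw [Finsupp.notMem_support_iff.1 h0, zero_smul]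
    rw [Algebra.mem_bot]
    exact ⟨v, by rw [Algebra.algebraMap_eq_smul_one, hv]⟩
  · intro p hp hcharp
    apply le_antisymm
    · intro z hz
      have hzc := Subalgebra.mem_center_iff.1 hz
      obtain ⟨c, hc⟩ := Finsupp.mem_span_range_iff_exists_finsupp.1 (WeylAux.mem_P F z)
      have hcc := WeylAux.central_coeffs F z hzc c hc
      rw [← hc, Finsupp.sum]
      apply sum_mem
      rintro ⟨i, j⟩ hij
      have hcij : c (i, j) ≠ 0 := Finsupp.mem_support_iff.1 hij
      have hdi : p ∣ i := by
        have h1 := (hcc i j).1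
        have : (i : F) = 0 := (mul_eq_zero.1 h1).resolve_right hcij
        exact (CharP.cast_eq_zero_iff F p i).1 this
      have hdj : p ∣ j := by
        have h1 := (hcc i j).2
        have : (j : F) = 0 := (mul_eq_zero.1 h1).resolve_right hcij
        exact (CharP.cast_eq_zero_iff F p j).1 this
      obtain ⟨ki, rfl⟩ := hdi
      obtain ⟨kj, rfl⟩ := hdj
      apply Subalgebra.smul_mem
      have hM : WeylAux.M F (p * ki, p * kj) = (Wx F ^ p) ^ ki * (Wy F ^ p) ^ kj := by
        rw [WeylAux.M]; dsimp only; rw [pow_mul, pow_mul]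
      rw [hM]
      have h1 : Wx F ^ p ∈ Algebra.adjoin F {Wx F ^ p, Wy F ^ p} :=
        Algebra.subset_adjoin (Set.mem_insert _ _)
      have h2 : Wy F ^ p ∈ Algebra.adjoin F {Wx F ^ p, Wy F ^ p} :=
        Algebra.subset_adjoin (Set.mem_insert_of_mem _ rfl)
      exact mul_mem (pow_mem h1 ki) (pow_mem h2 kj)
    · apply Algebra.adjoin_le
      rintro a (rfl | rfl)
      · rw [SetLike.mem_coe, Subalgebra.mem_center_iff]
        apply WeylAux.commutes_of_gen
        · rw [← pow_succ', ← pow_succ]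
        · have h := WeylAux.yxn F p
          rw [CharP.cast_eq_zero F p, zero_smul, add_zero] at h
          exact h
      · rw [SetLike.mem_coe, Subalgebra.mem_center_iff]
        apply WeylAux.commutes_of_gen
        · have h := WeylAux.ynx F p
          rw [CharP.cast_eq_zero F p, zero_smul, add_zero] at h
          exact h.symm
        · rw [← pow_succ', ← pow_succ]
end

section
/- If char F = p > 0, then A₁ is a free module over its center Z(A₁) = F[x^p, y^p] with basis {x^i y^j : 0 ≤ i, j < p}. -/
/-!
From `y * x = x * y + 1` one gets `y * x ^ n = x ^ n * y + n * x ^ (n - 1)` and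
`y ^ n * x = x * y ^ n + n * y ^ (n - 1)`, so `x ^ p` and `y ^ p` are central in characteristic `p`.

The ordered monomials `x ^ i * y ^ j` form an `F`-basis: their span contains `1` and is stable
under left multiplication by `x` and `y`, and they are independent because of the representation
described at `Weyl.toEnd`. In this basis the commutators with `y` and `x` act on coefficients as
`c (i, j) ↦ (i + 1) * c (i + 1, j)` and `c (i, j) ↦ (j + 1) * c (i, j + 1)`, so a central element
only involves monomials whose exponents are both divisible by `p`: the center is `F[x ^ p, y ^ p]`,
with `F`-basis `x ^ (a * p) * y ^ (b * p)`.

Writing exponents as `a * p + i` with `i < p`, the products of the central monomials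
`x ^ (a * p) * y ^ (b * p)` with the `x ^ i * y ^ j`, `i, j < p`, run bijectively over the
monomial basis; since the central monomials span the center over `F`, the `x ^ i * y ^ j` with
`i, j < p` form a basis over the center.
-/

open Submodule Set

section Tower

variable {R S A : Type*} [Semiring R] [Semiring S] [AddCommMonoid A] [Module R S] [Module S A]
  [Module R A] [IsScalarTower R S A] {ι κ : Type*} {b : ι → S} {c : κ → A}

theorem LinearIndependent.of_smul_of_span_eq_top (hb : span R (range b) = ⊤)
    (hbc : LinearIndependent R fun k : κ × ι => b k.2 • c k.1) : LinearIndependent S c := by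
  rw [LinearIndependent, Finsupp.linearCombination_smul, LinearMap.coe_comp,
    LinearMap.coe_restrictScalars] at hbc
  refine hbc.of_comp_right ((Finsupp.mapRange_surjective _ (map_zero _) ?_).comp
    (LinearEquiv.surjective _))
  rwa [← LinearMap.range_eq_top, Finsupp.range_linearCombination]

theorem Submodule.span_eq_top_of_span_smul_eq_top
    (hbc : span R (range fun k : κ × ι => b k.2 • c k.1) = ⊤) : span S (range c) = ⊤ := by
  rw [← restrictScalars_eq_top_iff R, eq_top_iff, ← hbc, span_le]
  rintro _ ⟨k, rfl⟩
  exact smul_mem _ _ (subset_span (mem_range_self k.1))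

end Tower

section Generators

variable {R A : Type*} [CommSemiring R] [Semiring A] [Algebra R A] {s : Set A}

theorem Subalgebra.mem_center_of_commute_of_adjoin_eq_top (hs : Algebra.adjoin R s = ⊤) {z : A}
    (h : ∀ a ∈ s, Commute z a) : z ∈ Subalgebra.center R A :=
  Subalgebra.mem_center_iff.2 fun _ =>
    (Algebra.commute_of_mem_adjoin_of_forall_mem_commute (hs ▸ Algebra.mem_top) h).symm.eq

theorem Submodule.eq_top_of_one_mem_of_mul_mem (hs : Algebra.adjoin R s = ⊤)
    {M : Submodule R A} (h1 : 1 ∈ M) (hmul : ∀ a ∈ s, ∀ m ∈ M, a * m ∈ M) : M = ⊤ := by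
  have key : ∀ a ∈ Algebra.adjoin R s, ∀ m ∈ M, a * m ∈ M := by
    intro a ha
    induction ha using Algebra.adjoin_induction with
    | mem a ha => exact hmul a ha
    | algebraMap r => exact fun m hm => Algebra.smul_def r m ▸ M.smul_mem r hm
    | add a b _ _ ha hb => exact fun m hm => (add_mul a b m).symm ▸ M.add_mem (ha m hm) (hb m hm)
    | mul a b _ _ ha hb => exact fun m hm => (mul_assoc a b m).symm ▸ ha _ (hb m hm)
  exact eq_top_iff.2 fun a _ => mul_one a ▸ key a (hs ▸ Algebra.mem_top) 1 h1

end Generators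

section CanonicalCommutation

variable {R : Type*} [Ring R] {x y : R}

theorem mul_pow_of_mul_eq_mul_add_one (h : y * x = x * y + 1) (n : ℕ) :
    y * x ^ n = x ^ n * y + n * x ^ (n - 1) := by
  induction n with
  | zero => simp
  | succ n ih =>
    cases n with
    | zero => simpa using h
    | succ n =>
      rw [pow_succ, ← mul_assoc, ih, add_mul, mul_assoc, h]
      simp only [Nat.add_sub_cancel, Nat.cast_add, Nat.cast_one]
      noncomm_ring

theorem pow_mul_of_mul_eq_mul_add_one (h : y * x = x * y + 1) (n : ℕ) :
    y ^ n * x = x * y ^ n + n * y ^ (n - 1) := by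
  have h' : MulOpposite.op x * MulOpposite.op y = MulOpposite.op y * MulOpposite.op x + 1 := by
    rw [← MulOpposite.op_mul, ← MulOpposite.op_mul, h, MulOpposite.op_add, MulOpposite.op_one]
  simpa [← MulOpposite.op_pow, ← MulOpposite.op_mul, Nat.cast_comm] using
    congrArg MulOpposite.unop (mul_pow_of_mul_eq_mul_add_one h' n)

end CanonicalCommutation

theorem MvPolynomial.linearIndependent_X_pow_mul_X_pow {R σ : Type*} [CommSemiring R] {i j : σ}
    (hij : i ≠ j) :
    LinearIndependent R fun k : ℕ × ℕ => (X i : MvPolynomial σ R) ^ k.1 * X j ^ k.2 := by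
  have hinj : Function.Injective fun k : ℕ × ℕ => Finsupp.single i k.1 + Finsupp.single j k.2 := by
    intro k l hkl
    have hi := DFunLike.congr_fun hkl i
    have hj := DFunLike.congr_fun hkl j
    exact Prod.ext (by simpa [Finsupp.single_apply, hij.symm] using hi)
      (by simpa [Finsupp.single_apply, hij] using hj)
  convert (basisMonomials σ R).linearIndependent.comp _ hinj using 1
  funext k
  simp [X_pow_eq_monomial, monomial_mul]

def Nat.prodDivModEquiv (n : ℕ) [NeZero n] : (Fin n × Fin n) × (ℕ × ℕ) ≃ ℕ × ℕ :=
  (Equiv.prodComm _ _).trans <| (Equiv.prodProdProdComm _ _ _ _).trans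
    ((Nat.divModEquiv n).prodCongr (Nat.divModEquiv n)).symm

theorem Nat.prodDivModEquiv_apply (n : ℕ) [NeZero n] (i j : Fin n) (a b : ℕ) :
    Nat.prodDivModEquiv n ((i, j), (a, b)) = (a * n + i, b * n + j) :=
  rfl

namespace Weyl

variable (F : Type) [Field F]

theorem Wy_mul_Wx : Wy F * Wx F = Wx F * Wy F + 1 := by
  simpa only [map_mul, map_add, map_one, Wx, Wy] using
    RingQuot.mkAlgHom_rel F (WeylRel.rel (F := F))

theorem adjoin_Wx_Wy : Algebra.adjoin F {Wx F, Wy F} = ⊤ := by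
  have h : {Wx F, Wy F} = RingQuot.mkAlgHom F (WeylRel F) '' range (FreeAlgebra.ι F) := by
    rw [← range_comp]
    ext
    simp [Fin.exists_fin_two, Wx, Wy, eq_comm]
  rw [h, Algebra.adjoin_image, FreeAlgebra.adjoin_range_ι, Algebra.map_top, AlgHom.range_eq_top]
  exact RingQuot.mkAlgHom_surjective F (WeylRel F)

noncomputable def monomial (k : ℕ × ℕ) : Weyl F := Wx F ^ k.1 * Wy F ^ k.2

section Representation

open MvPolynomial

/-- `x` acts on `F[X₀, X₁]` as multiplication by `X₀` and `y` as `∂/∂X₀ + X₁`, so that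
`x ^ i * y ^ j` sends `1` to `X₀ ^ i * X₁ ^ j`. The term `X₁` is what keeps the action faithful:
`∂/∂X₀` alone has `p`-th power zero. -/
noncomputable def toEnd : Weyl F →ₐ[F] Module.End F (MvPolynomial (Fin 2) F) :=
  RingQuot.liftAlgHom F ⟨FreeAlgebra.lift F
    ![LinearMap.mulLeft F (X 0), (pderiv 0).toLinearMap + LinearMap.mulLeft F (X 1)], by
    rintro _ _ ⟨⟩
    refine LinearMap.ext fun f => ?_
    simp [Derivation.leibniz]
    ring⟩

theorem toEnd_Wy_pow_one (n : ℕ) :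
    (toEnd F (Wy F) ^ n) 1 = (X 1 : MvPolynomial (Fin 2) F) ^ n := by
  induction n with
  | zero => simp
  | succ n ih =>
    rw [pow_succ', Module.End.mul_apply, ih]
    simp [toEnd, Wy, Derivation.leibniz_pow, pow_succ']

theorem toEnd_monomial_one (k : ℕ × ℕ) :
    toEnd F (monomial F k) 1 = (X 0 : MvPolynomial (Fin 2) F) ^ k.1 * X 1 ^ k.2 := by
  have hx : toEnd F (Wx F) = LinearMap.mulLeft F (X 0) := by simp [toEnd, Wx]
  rw [monomial, map_mul, map_pow, map_pow, Module.End.mul_apply, toEnd_Wy_pow_one, hx,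
    LinearMap.pow_mulLeft, LinearMap.mulLeft_apply]

end Representation

theorem linearIndependent_monomial : LinearIndependent F (monomial F) := by
  refine .of_comp (LinearMap.applyₗ 1 ∘ₗ (toEnd F).toLinearMap) ?_
  have h : ⇑(LinearMap.applyₗ 1 ∘ₗ (toEnd F).toLinearMap) ∘ monomial F =
      fun k => (MvPolynomial.X 0 : MvPolynomial (Fin 2) F) ^ k.1 * MvPolynomial.X 1 ^ k.2 :=
    funext (toEnd_monomial_one F)
  rw [h]
  exact MvPolynomial.linearIndependent_X_pow_mul_X_pow (zero_ne_one' (Fin 2))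

theorem Wx_mul_monomial (k : ℕ × ℕ) : Wx F * monomial F k = monomial F (k.1 + 1, k.2) := by
  rw [monomial, monomial, ← mul_assoc, ← pow_succ']

theorem monomial_mul_Wy (k : ℕ × ℕ) : monomial F k * Wy F = monomial F (k.1, k.2 + 1) := by
  rw [monomial, monomial, mul_assoc, ← pow_succ]

theorem Wy_mul_monomial_sub (k : ℕ × ℕ) :
    Wy F * monomial F k - monomial F k * Wy F = (k.1 : F) • monomial F (k.1 - 1, k.2) := by
  rw [Nat.cast_smul_eq_nsmul, nsmul_eq_mul, monomial, monomial, ← mul_assoc,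
    mul_pow_of_mul_eq_mul_add_one (Wy_mul_Wx F)]
  simp only [add_mul, mul_assoc, ← pow_succ, ← pow_succ', add_sub_cancel_left]

theorem monomial_mul_Wx_sub (k : ℕ × ℕ) :
    monomial F k * Wx F - Wx F * monomial F k = (k.2 : F) • monomial F (k.1, k.2 - 1) := by
  rw [Nat.cast_smul_eq_nsmul, nsmul_eq_mul, monomial, monomial, mul_assoc,
    pow_mul_of_mul_eq_mul_add_one (Wy_mul_Wx F)]
  simp only [mul_add, ← mul_assoc, ← pow_succ, ← pow_succ', add_sub_cancel_left]
  rw [(Nat.cast_commute _ _).eq]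

theorem span_monomial : span F (range (monomial F)) = ⊤ := by
  refine eq_top_of_one_mem_of_mul_mem (adjoin_Wx_Wy F)
    (subset_span ⟨(0, 0), by simp [monomial]⟩) ?_
  intro a ha m hm
  refine (span_le (p := (span F (range (monomial F))).comap (LinearMap.mulLeft F a)) |>.2 ?_) hm
  rintro _ ⟨k, rfl⟩
  rcases ha with rfl | rfl
  · exact subset_span ⟨_, (Wx_mul_monomial F k).symm⟩
  · show Wy F * monomial F k ∈ span F (range (monomial F))
    rw [← sub_add_cancel (Wy F * _), Wy_mul_monomial_sub, monomial_mul_Wy]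
    exact add_mem (smul_mem _ _ (subset_span (mem_range_self _))) (subset_span (mem_range_self _))

noncomputable def monomialBasis : Module.Basis (ℕ × ℕ) F (Weyl F) :=
  .mk (linearIndependent_monomial F) (span_monomial F).ge

theorem monomialBasis_apply (k : ℕ × ℕ) : monomialBasis F k = monomial F k :=
  Module.Basis.mk_apply ..

theorem monomialBasis_repr_monomial (k : ℕ × ℕ) :
    (monomialBasis F).repr (monomial F k) = Finsupp.single k 1 := by
  rw [← monomialBasis_apply, Module.Basis.repr_self]

theorem monomialBasis_repr_Wy_mul_sub (w : Weyl F) (i j : ℕ) :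
    (monomialBasis F).repr (Wy F * w - w * Wy F) (i, j) =
      (i + 1 : F) * (monomialBasis F).repr w (i + 1, j) := by
  suffices h : Finsupp.lapply (i, j) ∘ₗ (monomialBasis F).repr.toLinearMap ∘ₗ
      (LinearMap.mulLeft F (Wy F) - LinearMap.mulRight F (Wy F)) =
      (i + 1 : F) • (Finsupp.lapply (i + 1, j) ∘ₗ (monomialBasis F).repr.toLinearMap) from
    LinearMap.congr_fun h w
  refine (monomialBasis F).ext fun k => ?_
  rcases k with ⟨_ | a, c⟩
  · simp [monomialBasis_apply, Wy_mul_monomial_sub, monomialBasis_repr_monomial]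
  · simp [monomialBasis_apply, Wy_mul_monomial_sub, monomialBasis_repr_monomial,
      Finsupp.single_apply]
    split_ifs with h
    · rw [h.1]
    · simp

theorem monomialBasis_repr_mul_Wx_sub (w : Weyl F) (i j : ℕ) :
    (monomialBasis F).repr (w * Wx F - Wx F * w) (i, j) =
      (j + 1 : F) * (monomialBasis F).repr w (i, j + 1) := by
  suffices h : Finsupp.lapply (i, j) ∘ₗ (monomialBasis F).repr.toLinearMap ∘ₗ
      (LinearMap.mulRight F (Wx F) - LinearMap.mulLeft F (Wx F)) =
      (j + 1 : F) • (Finsupp.lapply (i, j + 1) ∘ₗ (monomialBasis F).repr.toLinearMap) from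
    LinearMap.congr_fun h w
  refine (monomialBasis F).ext fun k => ?_
  rcases k with ⟨a, _ | c⟩
  · simp [monomialBasis_apply, monomial_mul_Wx_sub, monomialBasis_repr_monomial]
  · simp [monomialBasis_apply, monomial_mul_Wx_sub, monomialBasis_repr_monomial,
      Finsupp.single_apply]
    split_ifs with h
    · rw [h.2]
    · simp

theorem monomial_mul_mul_eq_pow_mul_pow (n a b : ℕ) :
    monomial F (a * n, b * n) = (Wx F ^ n) ^ a * (Wy F ^ n) ^ b := by
  rw [monomial, pow_mul', pow_mul']

section CharP

variable (p : ℕ) [CharP F p]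

theorem cast_char_eq_zero : (p : Weyl F) = 0 := by
  rw [← map_natCast (algebraMap F (Weyl F)), CharP.cast_eq_zero, map_zero]

theorem Wx_pow_mem_center : Wx F ^ p ∈ Subalgebra.center F (Weyl F) := by
  refine Subalgebra.mem_center_of_commute_of_adjoin_eq_top (adjoin_Wx_Wy F) ?_
  rintro _ (rfl | rfl)
  · exact (Commute.self_pow _ _).symm
  · rw [Commute, SemiconjBy, mul_pow_of_mul_eq_mul_add_one (Wy_mul_Wx F), cast_char_eq_zero,
      zero_mul, add_zero]

theorem Wy_pow_mem_center : Wy F ^ p ∈ Subalgebra.center F (Weyl F) := by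
  refine Subalgebra.mem_center_of_commute_of_adjoin_eq_top (adjoin_Wx_Wy F) ?_
  rintro _ (rfl | rfl)
  · rw [Commute, SemiconjBy, pow_mul_of_mul_eq_mul_add_one (Wy_mul_Wx F), cast_char_eq_zero,
      zero_mul, add_zero]
  · exact (Commute.self_pow _ _).symm

theorem adjoin_le_center :
    Algebra.adjoin F {Wx F ^ p, Wy F ^ p} ≤ Subalgebra.center F (Weyl F) :=
  Algebra.adjoin_le <| by
    rintro _ (rfl | rfl)
    exacts [Wx_pow_mem_center F p, Wy_pow_mem_center F p]

theorem monomial_mul_mul_mem_center (a b : ℕ) :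
    monomial F (a * p, b * p) ∈ Subalgebra.center F (Weyl F) := by
  rw [monomial_mul_mul_eq_pow_mul_pow]
  exact mul_mem (pow_mem (Wx_pow_mem_center F p) _) (pow_mem (Wy_pow_mem_center F p) _)

theorem dvd_of_mem_center {z : Weyl F} (hz : z ∈ Subalgebra.center F (Weyl F)) {k : ℕ × ℕ}
    (hk : (monomialBasis F).repr z k ≠ 0) : p ∣ k.1 ∧ p ∣ k.2 := by
  have hcomm := Subalgebra.mem_center_iff.1 hz
  obtain ⟨i, j⟩ := k
  constructor
  · rcases i with _ | i
    · exact dvd_zero p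
    have h := monomialBasis_repr_Wy_mul_sub F z i j
    rw [hcomm, sub_self, map_zero, Finsupp.zero_apply, eq_comm] at h
    rw [← CharP.cast_eq_zero_iff F p, Nat.cast_succ]
    exact (mul_eq_zero.1 h).resolve_right hk
  · rcases j with _ | j
    · exact dvd_zero p
    have h := monomialBasis_repr_mul_Wx_sub F z i j
    rw [hcomm, sub_self, map_zero, Finsupp.zero_apply, eq_comm] at h
    rw [← CharP.cast_eq_zero_iff F p, Nat.cast_succ]
    exact (mul_eq_zero.1 h).resolve_right hk

theorem span_monomial_mul_mul_eq_center :
    span F (range fun k : ℕ × ℕ => monomial F (k.1 * p, k.2 * p)) =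
      Subalgebra.toSubmodule (Subalgebra.center F (Weyl F)) := by
  refine le_antisymm (span_le.2 ?_) fun z hz => ?_
  · rintro _ ⟨k, rfl⟩
    exact monomial_mul_mul_mem_center F p k.1 k.2
  · refine span_mono ?_ ((Module.Basis.mem_span_image _).2 fun k hk =>
      dvd_of_mem_center F p hz (Finsupp.mem_support_iff.1 hk))
    rintro _ ⟨⟨_, _⟩, ⟨⟨a, rfl⟩, ⟨b, rfl⟩⟩, rfl⟩
    exact ⟨(a, b), by simp [monomialBasis_apply, mul_comm]⟩

theorem center_eq_adjoin :
    Subalgebra.center F (Weyl F) = Algebra.adjoin F {Wx F ^ p, Wy F ^ p} := by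
  refine le_antisymm ?_ (adjoin_le_center F p)
  rw [← Subalgebra.toSubmodule.le_iff_le, ← span_monomial_mul_mul_eq_center, span_le]
  rintro _ ⟨k, rfl⟩
  show monomial F (k.1 * p, k.2 * p) ∈ Algebra.adjoin F {Wx F ^ p, Wy F ^ p}
  rw [monomial_mul_mul_eq_pow_mul_pow]
  exact mul_mem (pow_mem (Algebra.subset_adjoin (.inl rfl)) _)
    (pow_mem (Algebra.subset_adjoin (.inr rfl)) _)

noncomputable def centerMonomial (k : ℕ × ℕ) : Subalgebra.center F (Weyl F) :=
  ⟨monomial F (k.1 * p, k.2 * p), monomial_mul_mul_mem_center F p k.1 k.2⟩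

theorem span_centerMonomial : span F (range (centerMonomial F p)) = ⊤ :=
  (span_range_subtype_eq_top_iff (Subalgebra.toSubmodule _) _).2
    (span_monomial_mul_mul_eq_center F p)

theorem centerMonomial_smul_monomial (a b i j : ℕ) :
    centerMonomial F p (a, b) • monomial F (i, j) = monomial F (a * p + i, b * p + j) := by
  have hy : Wy F ^ (b * p) * Wx F ^ i = Wx F ^ i * Wy F ^ (b * p) :=
    (Subalgebra.mem_center_iff.1 (pow_mul' (Wy F) b p ▸ pow_mem (Wy_pow_mem_center F p) b) _).symm
  simp only [Subalgebra.smul_def, centerMonomial, monomial, pow_add, smul_eq_mul]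
  rw [mul_assoc, ← mul_assoc (Wy F ^ _), hy]
  simp only [mul_assoc]

variable [NeZero p]

theorem centerMonomial_smul_monomial_eq_comp :
    (fun k : (Fin p × Fin p) × (ℕ × ℕ) => centerMonomial F p k.2 • monomial F (k.1.1, k.1.2)) =
      monomialBasis F ∘ Nat.prodDivModEquiv p := by
  funext ⟨⟨i, j⟩, ⟨a, b⟩⟩
  rw [Function.comp_apply, Nat.prodDivModEquiv_apply, monomialBasis_apply,
    centerMonomial_smul_monomial]

noncomputable def basisOverCenter :
    Module.Basis (Fin p × Fin p) (Subalgebra.center F (Weyl F)) (Weyl F) :=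
  .mk (v := fun ij => monomial F (ij.1, ij.2))
    (.of_smul_of_span_eq_top (span_centerMonomial F p) <| by
      rw [centerMonomial_smul_monomial_eq_comp]
      exact (monomialBasis F).linearIndependent.comp _ (Equiv.injective _))
    (span_eq_top_of_span_smul_eq_top <| by
      rw [centerMonomial_smul_monomial_eq_comp, range_comp, Equiv.range_eq_univ, image_univ,
        (monomialBasis F).span_eq]).ge

theorem basisOverCenter_apply (ij : Fin p × Fin p) :
    basisOverCenter F p ij = Wx F ^ (ij.1 : ℕ) * Wy F ^ (ij.2 : ℕ) :=
  Module.Basis.mk_apply ..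

end CharP

end Weyl

/-- In characteristic p > 0, the Weyl algebra is free over its center
Z(A₁) = F[x^p, y^p], with basis {x^i y^j : 0 ≤ i, j < p}. -/
theorem weyl_free_over_center (F : Type) [Field F] (p : ℕ) (hp : p ≠ 0) [CharP F p] :
    Subalgebra.center F (Weyl F) =
        Algebra.adjoin F {Wx F ^ p, Wy F ^ p} ∧
      ∃ b : Module.Basis (Fin p × Fin p) (Subalgebra.center F (Weyl F)) (Weyl F),
        ∀ ij : Fin p × Fin p, b ij = Wx F ^ (ij.1 : ℕ) * Wy F ^ (ij.2 : ℕ) :=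
  haveI : NeZero p := ⟨hp⟩
  ⟨Weyl.center_eq_adjoin F p, Weyl.basisOverCenter F p, Weyl.basisOverCenter_apply F p⟩
end

section
/- Every multihomogeneous weak polynomial identity f(x₁,x₂) in two variables for the pair (A₁, V) of multidegree (r,s) with r ≥ s > 0 is, modulo the ideal I generated by Γ₃, St₃, T₄, of the form Σ_{i=1}^{s} α_i x₁^{r-i} x₂^{s-i} [x₁,x₂]^i; moreover evaluating at (x, y) forces all α_i = 0, so f ∈ I. -/
open FreeAlgebra

/-- The multihomogeneous component of multidegree `δ` (a multiset of variable indices). -/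
noncomputable def mhComponent (F : Type) [Field F] (δ : Multiset ℕ) (f : FreeAlgebra F ℕ) :
    FreeAlgebra F ℕ :=
  letI e : FreeAlgebra F ℕ ≃ₐ[F] MonoidAlgebra F (FreeMonoid ℕ) :=
    FreeAlgebra.equivMonoidAlgebraFreeMonoid
  e.symm (MonoidAlgebra.ofCoeff
    (Finsupp.filter (fun w : FreeMonoid ℕ => (↑(FreeMonoid.toList w) : Multiset ℕ) = δ)
    (e f).coeff))

/-! Modulo `I` the commutator `c = [x₂, x₁]` commutes with every variable (this is `Γ₃`), so the
straightening rule `x₂ x₁ᵃ⁺¹ = x₁ᵃ⁺¹ x₂ + (a + 1) x₁ᵃ c` rewrites every word of multidegree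
`(r, s)` as a combination of the normal monomials `x₁^(r-j) x₂^(s-j) cʲ`. The substitution
`x₁ ↦ x`, `x₂ ↦ y` kills `I` (commutators of elements of `V` are scalars, and `St₃`, `T₄` vanish
as soon as two of their first three arguments coincide) and sends `c` to `1`, hence the normal
monomials to `x^(r-j) y^(s-j)`. These are linearly independent in `A₁`, as their action on `1` in
the representation `x ↦ t`, `y ↦ u + ∂/∂t` on `F[t, u]` shows, so all coefficients vanish and
`f ∈ I`. -/

section Straightening

variable {R : Type*} [Ring R] {x y : R}

theorem mul_pow_succ_of_commute (hx : Commute (y * x - x * y) x) (n : ℕ) :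
    y * x ^ (n + 1) = x ^ (n + 1) * y + (n + 1) • (x ^ n * (y * x - x * y)) := by
  induction n with
  | zero => simp
  | succ n ih =>
    rw [pow_succ x (n + 1), ← mul_assoc, ih, add_mul, smul_mul_assoc, mul_assoc (x ^ n),
      hx.eq, ← mul_assoc, ← pow_succ, succ_nsmul _ (n + 1)]
    noncomm_ring

def normalMonomial (x y : R) : ℕ × ℕ × ℕ → R
  | (a, b, j) => x ^ a * y ^ b * (y * x - x * y) ^ j

theorem normalMonomial_succ (hx : Commute (y * x - x * y) x) (hy : Commute (y * x - x * y) y)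
    (a b j : ℕ) :
    y * normalMonomial x y (a + 1, b, j) =
      normalMonomial x y (a + 1, b + 1, j) + (a + 1) • normalMonomial x y (a, b, j + 1) := by
  simp only [normalMonomial]
  rw [← mul_assoc, ← mul_assoc, mul_pow_succ_of_commute hx, add_mul, add_mul, smul_mul_assoc,
    smul_mul_assoc, mul_assoc (x ^ a), (hy.pow_right b).eq, pow_succ' _ j, pow_succ' y b]
  noncomm_ring

end Straightening

section NormalSpan

variable (F : Type*) {A : Type*} [Field F] [Ring A] [Algebra F A]

def normalExponents (r s : ℕ) : Set (ℕ × ℕ × ℕ) := {(a, b, j) | a + j = r ∧ b + j = s}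

def normalSpan (x y : A) (r s : ℕ) : Submodule F A :=
  Submodule.span F (normalMonomial x y '' normalExponents r s)

variable {F} {x y : A} {r s : ℕ}

theorem mul_mem_of_mem_span {S : Set A} {P : Submodule F A} (z : A)
    (h : ∀ m ∈ S, z * m ∈ P) {m : A} (hm : m ∈ Submodule.span F S) : z * m ∈ P :=
  (Submodule.map_span_le (LinearMap.mulLeft F z) S P).2 h ⟨m, hm, rfl⟩

theorem one_mem_normalSpan : (1 : A) ∈ normalSpan F x y 0 0 :=
  Submodule.subset_span ⟨(0, 0, 0), ⟨rfl, rfl⟩, by simp [normalMonomial]⟩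

theorem x_mul_mem_normalSpan {m : A} (hm : m ∈ normalSpan F x y r s) :
    x * m ∈ normalSpan F x y (r + 1) s := by
  refine mul_mem_of_mem_span x ?_ hm
  rintro _ ⟨⟨a, b, j⟩, ⟨rfl, rfl⟩, rfl⟩
  refine Submodule.subset_span ⟨(a + 1, b, j), ⟨by ring, rfl⟩, ?_⟩
  simp only [normalMonomial, pow_succ', mul_assoc]

theorem y_mul_mem_normalSpan (hx : Commute (y * x - x * y) x)
    (hy : Commute (y * x - x * y) y) {m : A} (hm : m ∈ normalSpan F x y r s) :
    y * m ∈ normalSpan F x y r (s + 1) := by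
  refine mul_mem_of_mem_span y ?_ hm
  rintro _ ⟨⟨a, b, j⟩, ⟨rfl, rfl⟩, rfl⟩
  rcases a with _ | a
  · refine Submodule.subset_span ⟨(0, b + 1, j), ⟨rfl, by ring⟩, ?_⟩
    simp only [normalMonomial, pow_zero, one_mul, pow_succ', mul_assoc]
  · rw [normalMonomial_succ hx hy]
    refine add_mem (Submodule.subset_span ⟨_, ⟨rfl, by ring⟩, rfl⟩)
      (Submodule.smul_of_tower_mem _ _ (Submodule.subset_span ⟨_, ⟨by ring, by ring⟩, rfl⟩))

theorem list_prod_mem_normalSpan (g : ℕ → A) (hx : Commute (g 1 * g 0 - g 0 * g 1) (g 0))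
    (hy : Commute (g 1 * g 0 - g 0 * g 1) (g 1)) (l : List ℕ)
    (hl : ∀ i ∈ l, i = 0 ∨ i = 1) :
    (l.map g).prod ∈ normalSpan F (g 0) (g 1) (l.count 0) (l.count 1) := by
  induction l with
  | nil => exact one_mem_normalSpan
  | cons i l ih =>
    have hl' := ih fun k hk => hl k (List.mem_cons_of_mem i hk)
    rcases hl i List.mem_cons_self with rfl | rfl
    · simpa using x_mul_mem_normalSpan hl'
    · simpa using y_mul_mem_normalSpan hx hy hl'

end NormalSpan

theorem mem_span_words_of_mhComponent_eq {F : Type} [Field F] {δ : Multiset ℕ}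
    {f : FreeAlgebra F ℕ} (hf : mhComponent F δ f = f) :
    f ∈ Submodule.span F
      (FreeMonoid.lift (ι F) '' {w | (FreeMonoid.toList w : Multiset ℕ) = δ}) := by
  rw [← hf, mhComponent]
  change MonoidAlgebra.lift F (FreeAlgebra F ℕ) (FreeMonoid ℕ) (FreeMonoid.lift (ι F)) _ ∈ _
  rw [MonoidAlgebra.lift_apply]
  refine Submodule.sum_mem _ fun w hw =>
    Submodule.smul_mem _ _ (Submodule.subset_span ⟨w, ?_, rfl⟩)
  simp only [Finsupp.support_filter, Finset.mem_filter] at hw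
  exact hw.2

section WeakQuotient

variable (F : Type) [Field F]

theorem mul_mem_weakIdeal_left (a : FreeAlgebra F ℕ) {m : FreeAlgebra F ℕ}
    (hm : m ∈ weakIdeal F) : a * m ∈ weakIdeal F := by
  refine mul_mem_of_mem_span a ?_ hm
  rintro _ ⟨b, g, c, hg, rfl⟩
  exact Submodule.subset_span ⟨a * b, g, c, hg, by simp only [mul_assoc]⟩

theorem mul_mem_weakIdeal_right (a : FreeAlgebra F ℕ) {m : FreeAlgebra F ℕ}
    (hm : m ∈ weakIdeal F) : m * a ∈ weakIdeal F := by
  refine (Submodule.map_span_le (LinearMap.mulRight F a) _ _).2 ?_ ⟨m, hm, rfl⟩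
  rintro _ ⟨b, g, c, hg, rfl⟩
  exact Submodule.subset_span
    ⟨b, g, c * a, hg, by simp only [LinearMap.mulRight_apply, mul_assoc]⟩

def weakTwoSidedIdeal : TwoSidedIdeal (FreeAlgebra F ℕ) :=
  .mk' (weakIdeal F) (weakIdeal F).zero_mem (weakIdeal F).add_mem (weakIdeal F).neg_mem
    (mul_mem_weakIdeal_left F _) (mul_mem_weakIdeal_right F _)

variable {F} in
theorem mem_weakTwoSidedIdeal {f : FreeAlgebra F ℕ} :
    f ∈ weakTwoSidedIdeal F ↔ f ∈ weakIdeal F :=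
  TwoSidedIdeal.mem_mk' ..

abbrev WeakQuotient : Type := (weakTwoSidedIdeal F).ringCon.Quotient

def weakMk : FreeAlgebra F ℕ →ₐ[F] WeakQuotient F :=
  RingCon.mkₐ F (weakTwoSidedIdeal F).ringCon

variable {F}

theorem weakMk_eq_zero_iff {f : FreeAlgebra F ℕ} : weakMk F f = 0 ↔ f ∈ weakIdeal F := by
  rw [← map_zero (weakMk F), weakMk, RingCon.mkₐ_apply, RingCon.mkₐ_apply, RingCon.eq,
    TwoSidedIdeal.rel_iff, sub_zero, mem_weakTwoSidedIdeal]

theorem commute_weakMk_commutator (k : ℕ) :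
    Commute (weakMk F (ι F 1) * weakMk F (ι F 0) - weakMk F (ι F 0) * weakMk F (ι F 1))
      (weakMk F (ι F k)) := by
  have hΓ : Gamma3 F 1 0 k ∈ weakIdeal F :=
    Submodule.subset_span ⟨1, _, 1, Or.inl ⟨1, 0, k, rfl⟩, by simp⟩
  rw [← weakMk_eq_zero_iff, Gamma3] at hΓ
  simp only [map_sub, map_mul] at hΓ
  exact sub_eq_zero.mp hΓ

theorem weakMk_mem_normalSpan {r s : ℕ} {f : FreeAlgebra F ℕ}
    (hf : mhComponent F (Multiset.replicate r 0 + Multiset.replicate s 1) f = f) :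
    weakMk F f ∈ normalSpan F (weakMk F (ι F 0)) (weakMk F (ι F 1)) r s := by
  refine (Submodule.map_span_le (weakMk F).toLinearMap _ _).2 ?_
    ⟨f, mem_span_words_of_mhComponent_eq hf, rfl⟩
  rintro _ ⟨w, hw, rfl⟩
  have hbin : ∀ i ∈ w.toList, i = 0 ∨ i = 1 := fun i hi => by
    have : i ∈ (w.toList : Multiset ℕ) := hi
    rw [hw.out, Multiset.mem_add] at this
    exact this.imp Multiset.eq_of_mem_replicate Multiset.eq_of_mem_replicate
  have hcount (i : ℕ) :
      w.toList.count i = (Multiset.replicate r 0 + Multiset.replicate s 1).count i := by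
    rw [← hw.out, Multiset.coe_count]
  have := list_prod_mem_normalSpan (F := F) (fun i => weakMk F (ι F i))
    (commute_weakMk_commutator 0) (commute_weakMk_commutator 1) _ hbin
  simpa [hcount, Multiset.count_replicate, FreeMonoid.lift_apply, map_list_prod,
    Function.comp_def] using this

end WeakQuotient

section Weyl

variable (F : Type) [Field F]

theorem Wy_mul_Wx_sub_Wx_mul_Wy : Wy F * Wx F - Wx F * Wy F = 1 := by
  have h := RingQuot.mkAlgHom_rel F (WeylRel.rel (F := F))
  rw [map_mul, map_add, map_mul, map_one] at h
  rw [Wx, Wy, h, add_sub_cancel_left]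

noncomputable def weylX : Module.End F (MvPolynomial (Fin 2) F) :=
  LinearMap.mulLeft F (MvPolynomial.X 0)

noncomputable def weylY : Module.End F (MvPolynomial (Fin 2) F) :=
  LinearMap.mulLeft F (MvPolynomial.X 1) + (MvPolynomial.pderiv 0).toLinearMap

theorem weylY_mul_weylX : weylY F * weylX F = weylX F * weylY F + 1 := by
  refine LinearMap.ext fun p => ?_
  simp only [weylY, weylX, Module.End.mul_apply, LinearMap.mulLeft_apply, LinearMap.add_apply,
    Derivation.coeFn_coe, Derivation.leibniz, smul_eq_mul, MvPolynomial.pderiv_X,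
    Pi.single_eq_same, mul_one, Module.End.one_apply]
  ring

noncomputable def weylAction : Weyl F →ₐ[F] Module.End F (MvPolynomial (Fin 2) F) :=
  RingQuot.liftAlgHom F ⟨FreeAlgebra.lift F ![weylX F, weylY F], by
    rintro _ _ ⟨⟩
    simp only [map_mul, map_add, map_one, lift_ι_apply]
    exact weylY_mul_weylX F⟩

theorem weylAction_Wx : weylAction F (Wx F) = weylX F := by
  simp [weylAction, Wx]

theorem weylAction_Wy : weylAction F (Wy F) = weylY F := by
  simp [weylAction, Wy]

theorem weylY_pow_one (b : ℕ) : (weylY F ^ b) 1 = MvPolynomial.X 1 ^ b := by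
  induction b with
  | zero => rfl
  | succ b ih =>
    rw [pow_succ', Module.End.mul_apply, ih, pow_succ']
    simp [weylY]

theorem weylAction_monomial_one (a b : ℕ) :
    weylAction F (Wx F ^ a * Wy F ^ b) 1 =
      MvPolynomial.monomial (Finsupp.single 0 a + Finsupp.single 1 b) 1 := by
  rw [map_mul, map_pow, map_pow, weylAction_Wx, weylAction_Wy, Module.End.mul_apply,
    weylY_pow_one, weylX, LinearMap.pow_mulLeft, LinearMap.mulLeft_apply,
    MvPolynomial.X_pow_eq_monomial, MvPolynomial.X_pow_eq_monomial, MvPolynomial.monomial_mul,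
    one_mul]

theorem linearIndependent_Wx_pow_mul_Wy_pow :
    LinearIndependent F (fun p : ℕ × ℕ => Wx F ^ p.1 * Wy F ^ p.2) := by
  refine LinearIndependent.of_comp ((LinearMap.applyₗ 1).comp (weylAction F).toLinearMap) ?_
  change LinearIndependent F fun p : ℕ × ℕ => weylAction F (Wx F ^ p.1 * Wy F ^ p.2) 1
  have hinj : Function.Injective
      fun p : ℕ × ℕ => Finsupp.single (0 : Fin 2) p.1 + Finsupp.single 1 p.2 := by
    intro p q h
    exact Prod.ext (by simpa using DFunLike.congr_fun h 0) (by simpa using DFunLike.congr_fun h 1)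
  have key : (fun p : ℕ × ℕ => weylAction F (Wx F ^ p.1 * Wy F ^ p.2) 1) =
      MvPolynomial.basisMonomials (Fin 2) F ∘
        fun p : ℕ × ℕ => Finsupp.single (0 : Fin 2) p.1 + Finsupp.single 1 p.2 :=
    funext fun p => weylAction_monomial_one F p.1 p.2
  rw [key]
  exact (MvPolynomial.basisMonomials (Fin 2) F).linearIndependent.comp _ hinj

end Weyl

theorem LinearIndepOn.eq_zero_of_mem_span_image {R M M' ι : Type*} [Ring R] [AddCommGroup M]
    [AddCommGroup M'] [Module R M] [Module R M'] {v : ι → M} {s : Set ι} (f : M →ₗ[R] M')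
    (hv : LinearIndepOn R (f ∘ v) s) {m : M} (hm : m ∈ Submodule.span R (v '' s))
    (hfm : f m = 0) : m = 0 := by
  obtain ⟨l, hl, rfl⟩ := Finsupp.mem_span_image_iff_linearCombination R |>.1 hm
  rw [Finsupp.apply_linearCombination] at hfm
  rw [linearIndepOn_iff.1 hv l hl hfm, map_zero]

theorem st3_eq_zero {R : Type*} [Ring R] {a b c : R} (h : a = b ∨ b = c ∨ a = c) :
    a * (b * c - c * b) - b * (a * c - c * a) + c * (a * b - b * a) = 0 := by
  rcases h with rfl | rfl | rfl <;> noncomm_ring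

theorem t4_eq_zero {R : Type*} [Ring R] {a b c d : R} (h : a = b ∨ b = c ∨ a = c) :
    (a * b - b * a) * (c * d - d * c) - (a * c - c * a) * (b * d - d * b) +
      (b * c - c * b) * (a * d - d * a) = 0 := by
  rcases h with rfl | rfl | rfl <;> noncomm_ring

section Evaluation

variable (F : Type) [Field F]

/-- Sending every variable other than `x₁` to `y` leaves only two values, so any three of them
contain a repetition; this is what kills `St₃` and `T₄`. -/
noncomputable def xyAssignment (i : ℕ) : Weyl F := if i = 0 then Wx F else Wy F

theorem xyAssignment_mem_WV (i : ℕ) : xyAssignment F i ∈ WV F := by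
  unfold xyAssignment
  split_ifs
  · exact Submodule.subset_span (Set.mem_insert _ _)
  · exact Submodule.subset_span (Set.mem_insert_of_mem _ rfl)

theorem xyAssignment_eq_or (i j k : ℕ) :
    xyAssignment F i = xyAssignment F j ∨ xyAssignment F j = xyAssignment F k ∨
      xyAssignment F i = xyAssignment F k := by
  unfold xyAssignment
  split_ifs <;> simp

theorem commutator_xyAssignment (i j : ℕ) : ∃ t : F,
    xyAssignment F i * xyAssignment F j - xyAssignment F j * xyAssignment F i =
      algebraMap F (Weyl F) t := by
  have h := Wy_mul_Wx_sub_Wx_mul_Wy F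
  unfold xyAssignment
  split_ifs
  · exact ⟨0, by simp⟩
  · exact ⟨-1, by rw [map_neg, map_one, ← h, neg_sub]⟩
  · exact ⟨1, by rw [map_one, h]⟩
  · exact ⟨0, by simp⟩

theorem lift_xyAssignment_eq_zero_of_mem_weakGen {g : FreeAlgebra F ℕ} (hg : g ∈ weakGen F) :
    lift F (xyAssignment F) g = 0 := by
  rcases hg with ⟨i, j, k, rfl⟩ | ⟨i, j, k, rfl⟩ | ⟨i, j, k, l, rfl⟩
  · obtain ⟨t, ht⟩ := commutator_xyAssignment F i j
    simp only [Gamma3, map_sub, map_mul, lift_ι_apply, ht, Algebra.commutes, sub_self]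
  · simpa only [St3, map_add, map_sub, map_mul, lift_ι_apply]
      using st3_eq_zero (xyAssignment_eq_or F i j k)
  · simpa only [T4, map_add, map_sub, map_mul, lift_ι_apply]
      using t4_eq_zero (xyAssignment_eq_or F i j k)

theorem weakIdeal_le_ker_lift_xyAssignment :
    weakIdeal F ≤ LinearMap.ker (lift F (xyAssignment F)).toLinearMap := by
  refine Submodule.span_le.2 ?_
  rintro _ ⟨a, g, b, hg, rfl⟩
  simp [lift_xyAssignment_eq_zero_of_mem_weakGen F hg]

noncomputable def weakQuotientEval : WeakQuotient F →ₐ[F] Weyl F :=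
  RingCon.liftₐ _ (lift F (xyAssignment F)) fun a b h => by
    rw [TwoSidedIdeal.rel_iff, mem_weakTwoSidedIdeal] at h
    have := weakIdeal_le_ker_lift_xyAssignment F h
    rw [LinearMap.mem_ker, AlgHom.toLinearMap_apply, map_sub, sub_eq_zero] at this
    exact this

theorem weakQuotientEval_weakMk (f : FreeAlgebra F ℕ) :
    weakQuotientEval F (weakMk F f) = lift F (xyAssignment F) f :=
  RingCon.liftₐ_mk ..

theorem linearIndepOn_weakQuotientEval_normalMonomial (r s : ℕ) :
    LinearIndepOn F (weakQuotientEval F ∘ normalMonomial (weakMk F (ι F 0)) (weakMk F (ι F 1)))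
      (normalExponents r s) := by
  have heval : weakQuotientEval F ∘ normalMonomial (weakMk F (ι F 0)) (weakMk F (ι F 1)) =
      (fun p : ℕ × ℕ => Wx F ^ p.1 * Wy F ^ p.2) ∘ fun t => (t.1, t.2.1) := by
    ext ⟨a, b, j⟩
    simp [normalMonomial, weakQuotientEval_weakMk, xyAssignment, Wy_mul_Wx_sub_Wx_mul_Wy]
  rw [heval]
  refine ((linearIndependent_Wx_pow_mul_Wy_pow F).linearIndepOn _).comp_of_image ?_
  rintro ⟨a, b, j⟩ ⟨hr, -⟩ ⟨a', b', j'⟩ ⟨hr', -⟩ h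
  simp only [Prod.mk.injEq] at h ⊢
  omega

end Evaluation

theorem weak_identity_two_variables_general (F : Type) [Field F]
    (r s : ℕ) (f : FreeAlgebra F ℕ)
    (hhom : mhComponent F (Multiset.replicate r 0 + Multiset.replicate s 1) f = f)
    (hid : ∀ u : ℕ → Weyl F, (∀ i, u i ∈ WV F) → FreeAlgebra.lift F u f = 0) :
    (∃ α : Fin s → F,
      f - ∑ i : Fin s, α i •
        (ι F 0 ^ (r - ((i : ℕ) + 1)) * ι F 1 ^ (s - ((i : ℕ) + 1)) *
          (ι F 0 * ι F 1 - ι F 1 * ι F 0) ^ ((i : ℕ) + 1)) ∈ weakIdeal F) ∧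
    f ∈ weakIdeal F := by
  have hf : f ∈ weakIdeal F := by
    rw [← weakMk_eq_zero_iff]
    refine (linearIndepOn_weakQuotientEval_normalMonomial F r s).eq_zero_of_mem_span_image
      (weakQuotientEval F).toLinearMap (weakMk_mem_normalSpan hhom) ?_
    rw [AlgHom.toLinearMap_apply, weakQuotientEval_weakMk]
    exact hid _ (xyAssignment_mem_WV F)
  exact ⟨⟨0, by simpa using hf⟩, hf⟩

/-- Every multihomogeneous weak polynomial identity in the two variables x₁, x₂
of multidegree (r, s) with r ≥ s > 0 is, modulo I, of the form
Σ α_i x₁^{r-i} x₂^{s-i} [x₁,x₂]^i, and in fact lies in I. -/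
theorem weak_identity_two_variables (F : Type) [Field F] [Infinite F]
    (r s : ℕ) (hs : 0 < s) (hrs : s ≤ r) (f : FreeAlgebra F ℕ)
    (hhom : mhComponent F (Multiset.replicate r 0 + Multiset.replicate s 1) f = f)
    (hid : ∀ u : ℕ → Weyl F, (∀ i, u i ∈ WV F) → FreeAlgebra.lift F u f = 0) :
    (∃ α : Fin s → F,
      f - ∑ i : Fin s, α i •
        (ι F 0 ^ (r - ((i : ℕ) + 1)) * ι F 1 ^ (s - ((i : ℕ) + 1)) *
          (ι F 0 * ι F 1 - ι F 1 * ι F 0) ^ ((i : ℕ) + 1)) ∈ weakIdeal F) ∧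
    f ∈ weakIdeal F :=
  weak_identity_two_variables_general F r s f hhom hid
end

section
/- The space of multilinear weak polynomial identities of multidegree (1,1,1) for the pair (A₁, V) has dimension 3, with basis Γ₃(x₁,x₂,x₃), Γ₃(x₁,x₃,x₂), and St₃(x₁,x₂,x₃); moreover Γ₃(x₂,x₃,x₁) = -Γ₃(x₁,x₂,x₃) + Γ₃(x₁,x₃,x₂) in F⟨X⟩. -/
open FreeAlgebra

/-!
For `u, v ∈ V` the commutator `u v - v u` is a scalar, since `y x - x y = 1`. Hence `Γ₃` vanishes
on `V`, and so does `St₃`: it becomes `ω(v,w) u - ω(u,w) v + ω(u,v) w` for the alternating form `ω`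
on the plane `V`, which is zero. Conversely, a multilinear `f = Σ_σ c_σ x_σ(1) x_σ(2) x_σ(3)`
vanishing on `V` is tested on substitutions by `x` and `y`, with `A₁` acting on `F[X]` through
`X ·` and `d/dX`: three substitutions give three independent linear conditions on the six `c_σ`,
and the solutions are exactly the combinations of `Γ₃(x₁,x₂,x₃)`, `Γ₃(x₁,x₃,x₂)`, `St₃(x₁,x₂,x₃)`.
-/

open FreeAlgebra Polynomial

namespace FreeAlgebra

variable (R : Type*) {X : Type*} [CommSemiring R]

noncomputable def word (l : List X) : FreeAlgebra R X := (l.map (ι R)).prod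

theorem basisFreeMonoid_ofList (l : List X) :
    basisFreeMonoid R X (.ofList l) = word R l := by
  simp [basisFreeMonoid, word, equivMonoidAlgebraFreeMonoid, FreeMonoid.lift_ofList]

theorem repr_word_apply [DecidableEq X] (l l' : List X) :
    (basisFreeMonoid R X).repr (word R l) (.ofList l') = if l = l' then 1 else 0 := by
  rw [← basisFreeMonoid_ofList, Module.Basis.repr_self]
  split_ifs with h
  · rw [h, Finsupp.single_eq_same]
  · exact Finsupp.single_eq_of_ne (FreeMonoid.ofList.injective.ne (Ne.symm h))

theorem lift_word {A : Type*} [Semiring A] [Algebra R A] (u : X → A) (l : List X) :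
    lift R u (word R l) = (l.map u).prod := by
  simp [word, map_list_prod, List.map_map]

end FreeAlgebra

section Multidegree

variable {F : Type} [Field F]

theorem repr_mhComponent (δ : Multiset ℕ) (f : FreeAlgebra F ℕ) :
    (basisFreeMonoid F ℕ).repr (mhComponent F δ f) =
      ((basisFreeMonoid F ℕ).repr f).filter (fun w => (w.toList : Multiset ℕ) = δ) := by
  unfold mhComponent basisFreeMonoid
  simp

theorem mhComponent_eq_self_iff {δ : Multiset ℕ} {f : FreeAlgebra F ℕ} :
    mhComponent F δ f = f ↔
      ∀ w, (basisFreeMonoid F ℕ).repr f w ≠ 0 → (w.toList : Multiset ℕ) = δ := by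
  rw [← (basisFreeMonoid F ℕ).repr.injective.eq_iff, repr_mhComponent,
    Finsupp.filter_eq_self_iff]

variable (F) in
noncomputable def multihomogeneous (δ : Multiset ℕ) : Submodule F (FreeAlgebra F ℕ) :=
  Submodule.span F (word F '' {l | (l : Multiset ℕ) = δ})

theorem word_mem_multihomogeneous {δ : Multiset ℕ} {l : List ℕ} (hl : (l : Multiset ℕ) = δ) :
    word F l ∈ multihomogeneous F δ :=
  Submodule.subset_span ⟨l, hl, rfl⟩

theorem mhComponent_eq_self_iff_mem {δ : Multiset ℕ} {f : FreeAlgebra F ℕ} :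
    mhComponent F δ f = f ↔ f ∈ multihomogeneous F δ := by
  have himage : word F '' {l | (l : Multiset ℕ) = δ} =
      basisFreeMonoid F ℕ '' {w | (w.toList : Multiset ℕ) = δ} := by
    ext g
    simp only [Set.mem_image, Set.mem_ofPred_eq, ← basisFreeMonoid_ofList]
    exact ⟨fun ⟨l, hl, h⟩ => ⟨_, hl, h⟩, fun ⟨w, hw, h⟩ => ⟨w.toList, hw, h⟩⟩
  rw [multihomogeneous, himage, Module.Basis.mem_span_image, mhComponent_eq_self_iff]
  exact ⟨fun h w hw => h w (Finsupp.mem_support_iff.1 hw),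
    fun h w hw => h (Finsupp.mem_support_iff.2 hw)⟩

theorem eq_sum_word_of_mhComponent_eq_self {l : List ℕ} (hl : l.Nodup) {f : FreeAlgebra F ℕ}
    (hf : mhComponent F l f = f) :
    f = (l.permutations.map fun p => (basisFreeMonoid F ℕ).repr f (.ofList p) • word F p).sum := by
  have hsupp : ((basisFreeMonoid F ℕ).repr f).support ⊆
      l.permutations.toFinset.map FreeMonoid.ofList.toEmbedding := fun w hw =>
    Finset.mem_map_equiv.2 <| List.mem_toFinset.2 <| List.mem_permutations.2 <|
      Multiset.coe_eq_coe.1 (mhComponent_eq_self_iff.1 hf w (Finsupp.mem_support_iff.1 hw))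
  conv_lhs => rw [← (basisFreeMonoid F ℕ).linearCombination_repr f]
  rw [Finsupp.linearCombination_apply, Finsupp.sum_of_support_subset _ hsupp _ (by simp),
    Finset.sum_map, ← List.sum_toFinset _ (List.nodup_permutations l hl)]
  simp only [Equiv.coe_toEmbedding, basisFreeMonoid_ofList]

end Multidegree

theorem permutations_012 :
    [0, 1, 2].permutations = [[0, 1, 2], [1, 0, 2], [2, 1, 0], [1, 2, 0], [2, 0, 1], [0, 2, 1]] := by
  simp [List.permutations, List.permutationsAux, List.permutationsAux.rec]

section FreeAlgebraIdentities

variable (F : Type) [Field F]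

theorem Gamma3_eq_word (i j k : ℕ) :
    Gamma3 F i j k = word F [i, j, k] - word F [j, i, k] - word F [k, i, j] + word F [k, j, i] := by
  simp only [Gamma3, word, List.map_cons, List.map_nil, List.prod_cons, List.prod_nil, mul_one]
  noncomm_ring

theorem St3_eq_word (i j k : ℕ) :
    St3 F i j k = word F [i, j, k] - word F [i, k, j] - word F [j, i, k] + word F [j, k, i] +
      word F [k, i, j] - word F [k, j, i] := by
  simp only [St3, word, List.map_cons, List.map_nil, List.prod_cons, List.prod_nil, mul_one]
  noncomm_ring

theorem Gamma3_mem_multihomogeneous {i j k : ℕ} {δ : Multiset ℕ} (hδ : ↑[i, j, k] = δ) :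
    Gamma3 F i j k ∈ multihomogeneous F δ := by
  subst hδ
  rw [Gamma3_eq_word]
  refine add_mem (sub_mem (sub_mem ?_ ?_) ?_) ?_ <;>
    exact word_mem_multihomogeneous (Multiset.coe_eq_coe.2 (by grind))

theorem St3_mem_multihomogeneous {i j k : ℕ} {δ : Multiset ℕ} (hδ : ↑[i, j, k] = δ) :
    St3 F i j k ∈ multihomogeneous F δ := by
  subst hδ
  rw [St3_eq_word]
  refine sub_mem (add_mem (add_mem (sub_mem (sub_mem ?_ ?_) ?_) ?_) ?_) ?_ <;>
    exact word_mem_multihomogeneous (Multiset.coe_eq_coe.2 (by grind))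

theorem Gamma3_jacobi (i j k : ℕ) : Gamma3 F j k i = -Gamma3 F i j k + Gamma3 F i k j := by
  simp only [Gamma3]
  noncomm_ring

theorem linearIndependent_Gamma3_Gamma3_St3 :
    LinearIndependent F ![Gamma3 F 0 1 2, Gamma3 F 0 2 1, St3 F 0 1 2] := by
  rw [Fintype.linearIndependent_iff]
  intro g hg
  have hcoeff : ∀ l : List ℕ, (basisFreeMonoid F ℕ).repr
      (g 0 • Gamma3 F 0 1 2 + g 1 • Gamma3 F 0 2 1 + g 2 • St3 F 0 1 2) (.ofList l) = 0 := by
    intro l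
    rw [Fin.sum_univ_three] at hg
    simpa using congrArg (fun f => (basisFreeMonoid F ℕ).repr f (.ofList l)) hg
  simp only [Gamma3_eq_word, St3_eq_word, map_add, map_sub, map_smul, Finsupp.add_apply,
    Finsupp.sub_apply, Finsupp.smul_apply, repr_word_apply, smul_eq_mul] at hcoeff
  have h012 : g 0 + g 2 = 0 := by simpa using hcoeff [0, 1, 2]
  have h021 : g 1 + -g 2 = 0 := by simpa using hcoeff [0, 2, 1]
  have h201 : -g 0 + -g 1 + g 2 = 0 := by simpa using hcoeff [2, 0, 1]
  intro i
  fin_cases i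
  · show g 0 = 0
    linear_combination -h201 - h021
  · show g 1 = 0
    linear_combination h012 + 2 * h021 + h201
  · show g 2 = 0
    linear_combination h012 + h021 + h201

end FreeAlgebraIdentities

def IsWeakIdentity {R A : Type*} [CommSemiring R] [Semiring A] [Algebra R A] (V : Submodule R A)
    (f : FreeAlgebra R ℕ) : Prop :=
  ∀ u : ℕ → A, (∀ i, u i ∈ V) → FreeAlgebra.lift R u f = 0

section Weyl

variable {F : Type} [Field F]

variable (F) in
theorem Wy_mul_Wx : Wy F * Wx F = Wx F * Wy F + 1 := by
  simpa [Wx, Wy] using RingQuot.mkAlgHom_rel F (WeylRel.rel (F := F))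

theorem commutator_smul_Wx_add_smul_Wy (p q r s : F) :
    (p • Wx F + q • Wy F) * (r • Wx F + s • Wy F) - (r • Wx F + s • Wy F) * (p • Wx F + q • Wy F) =
      algebraMap F (Weyl F) (q * r - p * s) := by
  simp only [add_mul, mul_add, smul_mul_assoc, mul_smul_comm, Wy_mul_Wx, smul_smul, smul_add,
    Algebra.algebraMap_eq_smul_one]
  module

theorem Gamma3_isWeakIdentity (i j k : ℕ) : IsWeakIdentity (WV F) (Gamma3 F i j k) := by
  intro u hu
  obtain ⟨p, q, hi⟩ := Submodule.mem_span_pair.1 (hu i)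
  obtain ⟨r, s, hj⟩ := Submodule.mem_span_pair.1 (hu j)
  simp only [Gamma3, map_sub, map_mul, lift_ι_apply, ← hi, ← hj]
  rw [commutator_smul_Wx_add_smul_Wy, Algebra.commutes, sub_self]

theorem St3_isWeakIdentity (i j k : ℕ) : IsWeakIdentity (WV F) (St3 F i j k) := by
  intro u hu
  obtain ⟨p₁, q₁, h₁⟩ := Submodule.mem_span_pair.1 (hu i)
  obtain ⟨p₂, q₂, h₂⟩ := Submodule.mem_span_pair.1 (hu j)
  obtain ⟨p₃, q₃, h₃⟩ := Submodule.mem_span_pair.1 (hu k)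
  simp only [St3, map_add, map_sub, map_mul, lift_ι_apply, ← h₁, ← h₂, ← h₃]
  simp only [commutator_smul_Wx_add_smul_Wy, ← Algebra.commutes, ← Algebra.smul_def]
  module

variable (F) in
noncomputable def weylPolyRep : Weyl F →ₐ[F] Module.End F F[X] :=
  RingQuot.liftAlgHom F ⟨lift F ![LinearMap.mulLeft F X, derivative], by
    rintro _ _ ⟨⟩
    refine LinearMap.ext fun p => ?_
    simp [Module.End.mul_apply, derivative_mul, add_comm]⟩

theorem weylPolyRep_Wx (p : F[X]) : weylPolyRep F (Wx F) p = X * p := by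
  simp [weylPolyRep, Wx]

theorem weylPolyRep_Wy (p : F[X]) : weylPolyRep F (Wy F) p = derivative p := by
  simp [weylPolyRep, Wy]

theorem coeff_relations_of_isWeakIdentity {c : List ℕ → F}
    (hf : IsWeakIdentity (WV F) ([0, 1, 2].permutations.map fun p => c p • word F p).sum) :
    2 * c [0, 1, 2] + c [0, 2, 1] + 2 * c [1, 0, 2] + c [1, 2, 0] = 0 ∧
    2 * c [0, 1, 2] + 2 * c [0, 2, 1] + c [1, 0, 2] + c [2, 0, 1] = 0 ∧
    c [0, 1, 2] + 2 * c [1, 0, 2] + 2 * c [1, 2, 0] + c [2, 1, 0] = 0 := by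
  have hx : Wx F ∈ WV F := Submodule.subset_span (by simp)
  have hy : Wy F ∈ WV F := Submodule.subset_span (by simp)
  have heval : ∀ (m : ℕ) (a b : Weyl F), a ∈ WV F → b ∈ WV F → ∀ p : F[X],
      (weylPolyRep F (lift F (fun i => if i = m then a else b)
        ([0, 1, 2].permutations.map fun p => c p • word F p).sum) p).eval 1 = 0 := by
    intro m a b ha hb p
    rw [hf _ fun i => by split_ifs <;> assumption]
    simp
  -- Evaluated at `1`, a word with a single `y` applied to `1` counts the `x`s to the right of that
  -- `y`, and a word with a single `x` applied to `X` counts the `y`s to the left of that `x`.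
  have h₁ := heval 2 (Wx F) (Wy F) hx hy X
  have h₂ := heval 0 (Wy F) (Wx F) hy hx 1
  have h₃ := heval 1 (Wy F) (Wx F) hy hx 1
  simp only [permutations_012, List.map_cons, List.map_nil, List.sum_cons, List.sum_nil,
    List.prod_cons, List.prod_nil, map_add, map_smul, map_mul, lift_word, LinearMap.add_apply,
    LinearMap.smul_apply, Module.End.mul_apply, weylPolyRep_Wx, weylPolyRep_Wy, derivative_mul,
    derivative_X, derivative_one, eval_add, eval_smul, eval_one, eval_X, smul_eq_mul,
    smul_add, smul_zero, ↓reduceIte, OfNat.zero_ne_ofNat, OfNat.one_ne_ofNat, OfNat.ofNat_ne_zero,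
    OfNat.ofNat_ne_one, one_ne_zero, zero_ne_one, add_zero, zero_add, mul_one, one_mul,
    mul_zero] at h₁ h₂ h₃
  exact ⟨by linear_combination h₁, by linear_combination h₂, by linear_combination h₃⟩

end Weyl

theorem sum_word_mem_span_of_coeff_relations {F : Type} [Field F] {c : List ℕ → F}
    (h₁ : 2 * c [0, 1, 2] + c [0, 2, 1] + 2 * c [1, 0, 2] + c [1, 2, 0] = 0)
    (h₂ : 2 * c [0, 1, 2] + 2 * c [0, 2, 1] + c [1, 0, 2] + c [2, 0, 1] = 0)
    (h₃ : c [0, 1, 2] + 2 * c [1, 0, 2] + 2 * c [1, 2, 0] + c [2, 1, 0] = 0) :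
    ([0, 1, 2].permutations.map fun p => c p • word F p).sum ∈
      Submodule.span F {Gamma3 F 0 1 2, Gamma3 F 0 2 1, St3 F 0 1 2} := by
  have hsum : ([0, 1, 2].permutations.map fun p => c p • word F p).sum =
      (-(c [1, 0, 2] + c [1, 2, 0])) • Gamma3 F 0 1 2 +
      (-(c [0, 1, 2] + c [1, 0, 2])) • Gamma3 F 0 2 1 +
      (c [0, 1, 2] + c [1, 0, 2] + c [1, 2, 0]) • St3 F 0 1 2 := by
    simp only [permutations_012, List.map_cons, List.map_nil, List.sum_cons, List.sum_nil]
    rw [Gamma3_eq_word, Gamma3_eq_word, St3_eq_word,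
      show c [0, 2, 1] = -(2 * c [0, 1, 2]) - 2 * c [1, 0, 2] - c [1, 2, 0] by
        linear_combination h₁,
      show c [2, 0, 1] = 2 * c [0, 1, 2] + 3 * c [1, 0, 2] + 2 * c [1, 2, 0] by
        linear_combination h₂ - 2 * h₁,
      show c [2, 1, 0] = -c [0, 1, 2] - 2 * c [1, 0, 2] - 2 * c [1, 2, 0] by
        linear_combination h₃]
    module
  rw [hsum]
  refine add_mem (add_mem ?_ ?_) ?_ <;> exact Submodule.smul_mem _ _ (Submodule.subset_span (by simp))

theorem weyl_weak_identities_multidegree_111_general (F : Type) [Field F] :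
    LinearIndependent F ![Gamma3 F 0 1 2, Gamma3 F 0 2 1, St3 F 0 1 2] ∧
    (∀ g ∈ ({Gamma3 F 0 1 2, Gamma3 F 0 2 1, St3 F 0 1 2} : Set (FreeAlgebra F ℕ)),
      mhComponent F {0, 1, 2} g = g ∧
      ∀ u : ℕ → Weyl F, (∀ i, u i ∈ WV F) → FreeAlgebra.lift F u g = 0) ∧
    (∀ f : FreeAlgebra F ℕ, mhComponent F {0, 1, 2} f = f →
      (∀ u : ℕ → Weyl F, (∀ i, u i ∈ WV F) → FreeAlgebra.lift F u f = 0) →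
      f ∈ Submodule.span F {Gamma3 F 0 1 2, Gamma3 F 0 2 1, St3 F 0 1 2}) ∧
    Gamma3 F 1 2 0 = -Gamma3 F 0 1 2 + Gamma3 F 0 2 1 := by
  refine ⟨linearIndependent_Gamma3_Gamma3_St3 F, ?_, fun f hmh hid => ?_, Gamma3_jacobi F 0 1 2⟩
  · rintro g (rfl | rfl | rfl)
    · exact ⟨mhComponent_eq_self_iff_mem.2 (Gamma3_mem_multihomogeneous F rfl),
        Gamma3_isWeakIdentity 0 1 2⟩
    · exact ⟨mhComponent_eq_self_iff_mem.2 (Gamma3_mem_multihomogeneous F (by decide)),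
        Gamma3_isWeakIdentity 0 2 1⟩
    · exact ⟨mhComponent_eq_self_iff_mem.2 (St3_mem_multihomogeneous F rfl),
        St3_isWeakIdentity 0 1 2⟩
  · rw [eq_sum_word_of_mhComponent_eq_self (by decide) hmh] at hid ⊢
    obtain ⟨h₁, h₂, h₃⟩ := coeff_relations_of_isWeakIdentity hid
    exact sum_word_mem_span_of_coeff_relations h₁ h₂ h₃

/-- The weak polynomial identities of multidegree (1,1,1) for (A₁, V) form a
3-dimensional space with basis Γ₃(x₁,x₂,x₃), Γ₃(x₁,x₃,x₂), St₃(x₁,x₂,x₃);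
moreover Γ₃(x₂,x₃,x₁) = -Γ₃(x₁,x₂,x₃) + Γ₃(x₁,x₃,x₂). Here x₁, x₂, x₃ are the
generators of index 0, 1, 2. -/
theorem weyl_weak_identities_multidegree_111 (F : Type) [Field F] [Infinite F] :
    LinearIndependent F ![Gamma3 F 0 1 2, Gamma3 F 0 2 1, St3 F 0 1 2] ∧
    (∀ g ∈ ({Gamma3 F 0 1 2, Gamma3 F 0 2 1, St3 F 0 1 2} : Set (FreeAlgebra F ℕ)),
      mhComponent F {0, 1, 2} g = g ∧
      ∀ u : ℕ → Weyl F, (∀ i, u i ∈ WV F) → FreeAlgebra.lift F u g = 0) ∧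
    (∀ f : FreeAlgebra F ℕ, mhComponent F {0, 1, 2} f = f →
      (∀ u : ℕ → Weyl F, (∀ i, u i ∈ WV F) → FreeAlgebra.lift F u f = 0) →
      f ∈ Submodule.span F {Gamma3 F 0 1 2, Gamma3 F 0 2 1, St3 F 0 1 2}) ∧
    Gamma3 F 1 2 0 = -Gamma3 F 0 1 2 + Gamma3 F 0 2 1 :=
  weyl_weak_identities_multidegree_111_general F
end
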